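/- arXiv:1701.00420 — 6 statements merged into one kernel-verified Lean document; each statement's English description precedes it below -/
import Mathlib

section
/- Let G be a finite abelian group and M = (D, σ, α) a connected combinatorial map. Then, as an identity in ℂ, the number Ñ_G(M) of nowhere-identity G-flows on M equals Σ_{B ⊆ E(M)} (−1)^{|E(M)∖B|} · |G|^{|B|−|V(M)|+c(B)}, where c(B) denotes the number of components of the spanning subgraph (V, B) and the exponent is an integer. -/
open Equiv

/-- The setoid on darts whose classes are the cycles (orbits) of a permutation. -/
def Equiv.Perm.cycleSetoid {D : Type*} (τ : Equiv.Perm D) : Setoid D :=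
  ⟨τ.SameCycle, ⟨fun x => Equiv.Perm.SameCycle.refl τ x, fun h => h.symm, fun h h' => h.trans h'⟩⟩

/-- The number of cycles (orbits) of a permutation. -/
noncomputable def Equiv.Perm.cycleCount {D : Type*} (τ : Equiv.Perm D) : ℕ :=
  Nat.card (Quotient τ.cycleSetoid)

/-- The ordered product of the values of `κ` around the `τ`-orbit of the dart `d`. -/
noncomputable def aroundProd {D G : Type*} [Group G] (τ : Equiv.Perm D) (κ : D → G) (d : D) : G :=
  ((List.range (Function.minimalPeriod (⇑τ) d)).map fun i => κ ((τ ^ i) d)).prod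

/-- A `G`-labelling of a combinatorial map with edge involution `α`. -/
def IsGLabelling {D G : Type*} [Group G] (α : Equiv.Perm D) (κ : D → G) : Prop :=
  ∀ d, κ (α d) = (κ d)⁻¹

/-- A `G`-flow on the combinatorial map `(D, σ, α)`. -/
def IsGFlow {D G : Type*} [Group G] (σ α : Equiv.Perm D) (κ : D → G) : Prop :=
  IsGLabelling α κ ∧ ∀ d, aroundProd σ κ d = 1

/-- A local `G`-tension on the combinatorial map `(D, σ, α)`: the product around every
face (orbit of `σ ∘ α`) is the identity. -/
def IsLocalTension {D G : Type*} [Group G] (σ α : Equiv.Perm D) (κ : D → G) : Prop :=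
  IsGLabelling α κ ∧ ∀ d, aroundProd (σ * α) κ d = 1

/-- A closed walk in the combinatorial map `(D, σ, α)`, as a nonempty list of darts. -/
def IsClosedWalk {D : Type*} (σ α : Equiv.Perm D) (W : List D) : Prop :=
  ∃ h : W ≠ [], W.Chain' (fun a b => σ.SameCycle (α a) b) ∧
    σ.SameCycle (α (W.getLast h)) (W.head h)

/-- A global `G`-tension on the combinatorial map `(D, σ, α)`. -/
def IsGlobalTension {D G : Type*} [Group G] (σ α : Equiv.Perm D) (κ : D → G) : Prop :=
  IsGLabelling α κ ∧ ∀ W : List D, IsClosedWalk σ α W → (W.map κ).prod = 1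

/-- Connectivity of the combinatorial map `(D, σ, α)`: the group generated by `σ` and `α`
acts transitively on the darts. -/
def MapConnected {D : Type*} (σ α : Equiv.Perm D) : Prop :=
  ∀ d d' : D, ∃ g ∈ Subgroup.closure ({σ, α} : Set (Equiv.Perm D)), g d = d'

/-- A covering of combinatorial maps `(D', σ', α') → (D, σ, α)`. -/
def IsMapCovering {D' D : Type*} (σ' α' : Equiv.Perm D') (σ α : Equiv.Perm D)
    (p : D' → D) : Prop :=
  Function.Surjective p ∧ (∀ d, p (σ' d) = σ (p d)) ∧ (∀ d, p (α' d) = α (p d)) ∧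
    ∀ d₁ d₂, σ'.SameCycle d₁ d₂ → p d₁ = p d₂ → d₁ = d₂

/-- The generating relation on vertices of the spanning subgraph `(V, B)`: for every dart `d`
of an edge in `B`, the `σ`-orbit of `d` is related to the `σ`-orbit of `α d`. -/
def spanningRel {D : Type*} (σ α : Equiv.Perm D) (B : Set (Quotient α.cycleSetoid)) :
    Quotient σ.cycleSetoid → Quotient σ.cycleSetoid → Prop := fun v w =>
  ∃ d : D, Quotient.mk α.cycleSetoid d ∈ B ∧
    Quotient.mk σ.cycleSetoid d = v ∧ Quotient.mk σ.cycleSetoid (α d) = w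

namespace FlowAux
open Finset Function
open scoped Classical
set_option linter.unusedSectionVars false

variable {D : Type} [Fintype D] {G : Type} [CommGroup G]

lemma aroundProd_eq_prod (τ : Perm D) (κ : D → G) (d : D) :
    aroundProd τ κ d = ∏ e ∈ univ.filter (fun e => τ.SameCycle d e), κ e := by
  have hper : d ∈ periodicPts ⇑τ := by
    have h : Function.IsPeriodicPt ⇑τ (orderOf τ) d := by
      have : (τ ^ (orderOf τ)) d = d := by rw [pow_orderOf_eq_one]; rfl
      exact this
    exact ⟨orderOf τ, orderOf_pos τ, h⟩
  have hn : 0 < minimalPeriod ⇑τ d := minimalPeriod_pos_of_mem_periodicPts hper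
  rw [show aroundProd τ κ d = ∏ i ∈ Finset.range (minimalPeriod ⇑τ d), κ ((τ ^ i) d) from rfl]
  refine Finset.prod_nbij (fun i => (τ ^ i) d) ?_ ?_ ?_ (fun _ _ => rfl)
  · intro i hi
    simp only [mem_coe, mem_filter, mem_univ, true_and]
    exact ⟨i, rfl⟩
  · intro i hi j hj h
    simp only [coe_range, Set.mem_Iio] at hi hj
    exact iterate_injOn_Iio_minimalPeriod hi hj h
  · intro e he
    simp only [coe_filter, Set.mem_setOf_eq, mem_univ, true_and] at he
    obtain ⟨i, hlt, rfl⟩ := he.exists_pow_eq'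
    refine ⟨i % minimalPeriod ⇑τ d, by simp [Nat.mod_lt _ hn], ?_⟩
    show (⇑τ)^[i % minimalPeriod ⇑τ d] d = (⇑τ)^[i] d
    exact iterate_mod_minimalPeriod_eq

/-- vertex set -/
abbrev Vtx (σ : Perm D) := Quotient σ.cycleSetoid
/-- edge set -/
abbrev Edg (α : Perm D) := Quotient α.cycleSetoid

def vmk (σ : Perm D) (d : D) : Vtx σ := Quotient.mk σ.cycleSetoid d
def emk (α : Perm D) (d : D) : Edg α := Quotient.mk α.cycleSetoid d

/-- The boundary homomorphism. -/
noncomputable def bnd (σ : Perm D) (G : Type) [CommGroup G] : (D → G) →* (Vtx σ → G) where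
  toFun κ := fun v => ∏ d ∈ univ.filter (fun d => vmk σ d = v), κ d
  map_one' := by funext v; simp
  map_mul' κ₁ κ₂ := by funext v; simp [Finset.prod_mul_distrib]

variable {σ α : Perm D}

lemma bnd_apply (κ : D → G) (d : D) : bnd σ G κ (vmk σ d) = aroundProd σ κ d := by
  rw [aroundProd_eq_prod]
  show ∏ e ∈ univ.filter (fun e => vmk σ e = vmk σ d), κ e = _
  refine Finset.prod_congr ?_ (fun _ _ => rfl)
  ext e
  simp only [mem_filter, mem_univ, true_and, vmk, Quotient.eq]
  exact ⟨fun h => h.symm, fun h => h.symm⟩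

lemma isGFlow_iff (κ : D → G) : IsGFlow σ α κ ↔ IsGLabelling α κ ∧ bnd σ G κ = 1 := by
  unfold IsGFlow
  refine and_congr Iff.rfl ⟨fun h => ?_, fun h d => ?_⟩
  · funext v
    induction v using Quotient.ind with
    | _ d => rw [show Quotient.mk σ.cycleSetoid d = vmk σ d from rfl, bnd_apply, h d]; rfl
  · rw [← bnd_apply, h]; rfl


section Edges
variable (hinv : ∀ d, α (α d) = d) (hfpf : ∀ d, α d ≠ d)
include hinv

lemma sameCycle_alpha (d : D) : α.SameCycle d (α d) := ⟨1, by simp⟩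

lemma sameCycle_alpha_iff {d e : D} : α.SameCycle d e ↔ e = d ∨ e = α d := by
  have key : ∀ n : ℕ, (α ^ n) d = d ∨ (α ^ n) d = α d := by
    intro n
    induction n with
    | zero => left; rfl
    | succ n ih =>
      rw [pow_succ']
      rcases ih with h | h
      · right; rw [Perm.mul_apply, h]
      · left; rw [Perm.mul_apply, h, hinv]
  constructor
  · intro h
    obtain ⟨i, _, rfl⟩ := h.exists_pow_eq'
    exact key i
  · rintro (rfl | rfl)
    · exact Perm.SameCycle.refl α e
    · exact sameCycle_alpha hinv d

lemma emk_alpha (d : D) : emk α (α d) = emk α d :=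
  Quotient.sound (sameCycle_alpha hinv d).symm

lemma eq_out_or (d : D) : d = (emk α d).out ∨ d = α ((emk α d).out) := by
  have h : α.SameCycle ((emk α d).out) d := by
    have := Quotient.out_eq (emk α d)
    exact Quotient.eq.mp this
  exact (sameCycle_alpha_iff hinv).mp h

include hfpf

lemma alpha_out_ne (e : Edg α) : α e.out ≠ e.out := hfpf _

end Edges

/-- The subgroup of `G`-labellings supported inside `B`. -/
noncomputable def labelSub (α : Perm D) (G : Type) [CommGroup G] (B : Set (Edg α)) :
    Subgroup (D → G) where
  carrier := {κ | IsGLabelling α κ ∧ ∀ d, emk α d ∉ B → κ d = 1}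
  mul_mem' := fun {a b} ha hb =>
    ⟨fun d => by simp only [Pi.mul_apply, ha.1 d, hb.1 d, mul_inv], fun d hd => by
      simp only [Pi.mul_apply, ha.2 d hd, hb.2 d hd, mul_one]⟩
  one_mem' := ⟨fun d => by simp, fun d _ => rfl⟩
  inv_mem' := fun {a} ha =>
    ⟨fun d => by simp only [Pi.inv_apply, ha.1 d], fun d hd => by
      simp only [Pi.inv_apply, ha.2 d hd, inv_one]⟩

variable [Fintype G]

lemma card_labelSub (hinv : ∀ d, α (α d) = d) (hfpf : ∀ d, α d ≠ d) (B : Set (Edg α)) :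
    Nat.card (labelSub α G B) = Nat.card G ^ Nat.card B := by
  rw [← Nat.card_fun (α := B) (β := G)]
  refine Nat.card_congr (Equiv.ofBijective (fun κ => fun e => κ.1 e.1.out) ⟨?_, ?_⟩)
  · intro κ κ' h
    ext d
    by_cases hd : emk α d ∈ B
    · have h0 : κ.1 (emk α d).out = κ'.1 (emk α d).out := congrFun h ⟨emk α d, hd⟩
      rcases eq_out_or hinv d with hc | hc
      · rw [hc]; exact h0
      · rw [hc, κ.2.1 _, κ'.2.1 _, h0]
    · rw [κ.2.2 d hd, κ'.2.2 d hd]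
  · intro f
    refine ⟨⟨fun d => if h : emk α d ∈ B then
        (if d = (emk α d).out then f ⟨emk α d, h⟩ else (f ⟨emk α d, h⟩)⁻¹) else 1, ?_, ?_⟩, ?_⟩
    · intro d
      have he : emk α (α d) = emk α d := emk_alpha hinv d
      by_cases hB : emk α d ∈ B
      · rcases eq_out_or hinv d with hc | hc
        · have h1 : ¬ (α d = (emk α d).out) := fun h => hfpf d (h.trans hc.symm)
          simp only [he, dif_pos hB, if_neg h1, if_pos hc]
        · have h2 : α d = (emk α d).out := by conv_lhs => rw [hc, hinv]
          have h3 : ¬ (d = (emk α d).out) := fun h => hfpf ((emk α d).out) (by rw [← h]; exact h2.trans h.symm)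
          simp only [he, dif_pos hB, if_pos h2, if_neg h3, inv_inv]
      · simp only [he, dif_neg hB, inv_one]
    · intro d hd; simp [dif_neg hd]
    · funext e
      simp only
      have h1 : emk α (e.1.out) = e.1 := Quotient.out_eq e.1
      simp [h1, dif_pos e.2]




variable {D : Type} [Fintype D] {G : Type} [CommGroup G] {σ α : Perm D}

/-- The components of the spanning subgraph. -/
abbrev Comp (σ α : Perm D) (B : Set (Edg α)) :=
  Quotient (Relation.EqvGen.setoid (spanningRel σ α B))

def cmk (σ α : Perm D) (B : Set (Edg α)) (v : Vtx σ) : Comp σ α B :=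
  Quotient.mk (Relation.EqvGen.setoid (spanningRel σ α B)) v

/-- The per-component product homomorphism. -/
noncomputable def Phi (σ α : Perm D) (G : Type) [CommGroup G] (B : Set (Edg α)) :
    (Vtx σ → G) →* (Comp σ α B → G) where
  toFun x := fun C => ∏ v ∈ univ.filter (fun v => cmk σ α B v = C), x v
  map_one' := by funext C; simp
  map_mul' x y := by funext C; simp [Finset.prod_mul_distrib]

lemma cmk_alpha {B : Set (Edg α)} {d : D} (hd : emk α d ∈ B) :
    cmk σ α B (vmk σ (α d)) = cmk σ α B (vmk σ d) :=
  (Quotient.sound (Relation.EqvGen.rel _ _ ⟨d, hd, rfl, rfl⟩)).symm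

lemma bnd_delta (σ : Perm D) (p : D) (c : G) :
    bnd σ G (fun e => if e = p then c else 1) = fun v => if vmk σ p = v then c else 1 := by
  funext v
  show ∏ d ∈ univ.filter (fun d => vmk σ d = v), (if d = p then c else 1) = _
  rw [Finset.prod_ite_eq' (univ.filter (fun d => vmk σ d = v)) p (fun _ => c)]
  simp

lemma phi_bnd {B : Set (Edg α)} (κ : D → G) (C : Comp σ α B) :
    Phi σ α G B (bnd σ G κ) C = ∏ d ∈ univ.filter (fun d => cmk σ α B (vmk σ d) = C), κ d := by
  show ∏ v ∈ univ.filter (fun v => cmk σ α B v = C),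
      ∏ d ∈ univ.filter (fun d => vmk σ d = v), κ d = _
  rw [Finset.prod_fiberwise_eq_prod_filter univ (univ.filter (fun v => cmk σ α B v = C))
    (vmk σ) κ]
  refine Finset.prod_congr ?_ (fun _ _ => rfl)
  ext d
  simp [mem_filter]

lemma phi_of_labelSub (hinv : ∀ d, α (α d) = d) (hfpf : ∀ d, α d ≠ d) {B : Set (Edg α)}
    {κ : D → G} (hκ : κ ∈ labelSub α G B) : Phi σ α G B (bnd σ G κ) = 1 := by
  funext C
  rw [phi_bnd, Pi.one_apply]
  rw [← Finset.prod_filter_mul_prod_filter_not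
    (univ.filter (fun d => cmk σ α B (vmk σ d) = C)) (fun d => emk α d ∈ B) κ]
  have h2 : ∏ d ∈ (univ.filter (fun d => cmk σ α B (vmk σ d) = C)).filter
      (fun d => ¬ emk α d ∈ B), κ d = 1 :=
    Finset.prod_eq_one fun d hd => hκ.2 d (Finset.mem_filter.mp hd).2
  have h1 : ∏ d ∈ (univ.filter (fun d => cmk σ α B (vmk σ d) = C)).filter
      (fun d => emk α d ∈ B), κ d = 1 := by
    refine Finset.prod_involution (fun d _ => α d) ?_ ?_ ?_ ?_
    · intro d _; rw [hκ.1 d, mul_inv_cancel]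
    · intro d _ _; exact hfpf d
    · intro d hd
      simp only [mem_filter, mem_univ, true_and] at hd ⊢
      exact ⟨by rw [cmk_alpha hd.2]; exact hd.1, by rw [emk_alpha hinv]; exact hd.2⟩
    · intro d _; exact hinv d
  rw [h1, h2, mul_one]


set_option linter.unusedSectionVars false

lemma alpha_eq_iff (hinv : ∀ d, α (α d) = d) {e d : D} : α e = d ↔ e = α d := by
  constructor
  · rintro rfl; rw [hinv]
  · rintro rfl; rw [hinv]

lemma exists_label_of_eqvGen (hinv : ∀ d, α (α d) = d) (hfpf : ∀ d, α d ≠ d)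
    {B : Set (Edg α)} {u w : Vtx σ}
    (h : Relation.EqvGen (spanningRel σ α B) u w) :
    ∀ g : G, ∃ κ : D → G, κ ∈ labelSub α G B ∧
      bnd σ G κ = fun v => (if v = u then g else 1) * (if v = w then g⁻¹ else 1) := by
  induction h with
  | rel a b hab =>
    intro g
    obtain ⟨d, hdB, hdu, hdw⟩ := hab
    refine ⟨(fun e => if e = d then g else 1) * (fun e => if e = α d then g⁻¹ else 1), ⟨?_, ?_⟩, ?_⟩
    · intro e
      simp only [Pi.mul_apply]
      rw [show ((α e = d) = (e = α d)) from propext (alpha_eq_iff hinv),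
        show ((α e = α d) = (e = d)) from propext α.injective.eq_iff]
      have hda : ¬ d = α d := fun h => hfpf d h.symm
      have had : ¬ α d = d := hfpf d
      by_cases h1 : e = d
      · have h2 : ¬ e = α d := by rw [h1]; exact hda
        simp [h1, h2, hda]
      · by_cases h2 : e = α d <;> simp [h1, h2, hda, had]
    · intro e he
      have h1 : ¬ e = d := by rintro rfl; exact he hdB
      have h2 : ¬ e = α d := by
        rintro rfl; rw [emk_alpha hinv] at he; exact he hdB
      simp [h1, h2]
    · rw [map_mul, bnd_delta, bnd_delta, show vmk σ d = a from hdu,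
        show vmk σ (α d) = b from hdw]
      funext v
      simp only [Pi.mul_apply]
      by_cases h1 : v = a <;> by_cases h2 : v = b <;>
        simp [h1, h2, Ne.symm, eq_comm]
  | refl a =>
    intro g
    refine ⟨1, one_mem _, ?_⟩
    rw [map_one]
    funext v
    by_cases h : v = a <;> simp [h]
  | symm a b hab ih =>
    intro g
    obtain ⟨κ, hm, hb⟩ := ih g⁻¹
    refine ⟨κ, hm, ?_⟩
    rw [hb]
    funext v
    simp only [inv_inv]
    exact mul_comm _ _
  | trans a b c hab hbc ih₁ ih₂ =>
    intro g
    obtain ⟨κ₁, hm₁, hb₁⟩ := ih₁ g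
    obtain ⟨κ₂, hm₂, hb₂⟩ := ih₂ g
    refine ⟨κ₁ * κ₂, mul_mem hm₁ hm₂, ?_⟩
    rw [map_mul, hb₁, hb₂]
    funext v
    simp only [Pi.mul_apply]
    by_cases h : v = b
    · simp [h, mul_assoc]
    · simp [h]

lemma phi_surjective (σ α : Perm D) (B : Set (Edg α)) :
    Function.Surjective (Phi σ α G B) := by
  intro y
  refine ⟨fun v => if v = (cmk σ α B v).out then y (cmk σ α B v) else 1, ?_⟩
  funext C
  show ∏ v ∈ univ.filter (fun v => cmk σ α B v = C),
    (if v = (cmk σ α B v).out then y (cmk σ α B v) else 1) = y C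
  rw [Finset.prod_congr rfl (g := fun v => if v = C.out then y C else 1)
    (fun v hv => by rw [(Finset.mem_filter.mp hv).2])]
  rw [Finset.prod_ite_eq' (univ.filter (fun v => cmk σ α B v = C)) C.out (fun _ => y C)]
  have : cmk σ α B C.out = C := Quotient.out_eq C
  simp [this]


lemma range_eq (hinv : ∀ d, α (α d) = d) (hfpf : ∀ d, α d ≠ d) (B : Set (Edg α)) :
    ((bnd σ G).domRestrict (labelSub α G B)).range = (Phi σ α G B).ker := by
  ext x
  constructor
  · rintro ⟨⟨κ, hκ⟩, rfl⟩
    exact phi_of_labelSub hinv hfpf hκ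
  · intro hx
    rw [MonoidHom.mem_ker] at hx
    have hrep : ∀ v : Vtx σ, Relation.EqvGen (spanningRel σ α B) v ((cmk σ α B v).out) := by
      intro v
      have h : cmk σ α B v = cmk σ α B ((cmk σ α B v).out) := (Quotient.out_eq _).symm
      exact Quotient.eq.mp h
    choose κf hmem hb using fun v => exists_label_of_eqvGen hinv hfpf (hrep v) (x v)
    refine ⟨⟨∏ v : Vtx σ, κf v, prod_mem fun v _ => hmem v⟩, ?_⟩
    show bnd σ G (∏ v : Vtx σ, κf v) = x
    rw [map_prod, Finset.prod_congr rfl (fun v _ => hb v)]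
    funext w
    rw [Finset.prod_apply]
    --
    rw [Finset.prod_mul_distrib]
    have h1 : ∏ v : Vtx σ, (if w = v then x v else 1) = x w := by
      rw [Finset.prod_ite_eq Finset.univ w x]; simp
    have h2 : ∏ v : Vtx σ, (if w = (cmk σ α B v).out then (x v)⁻¹ else 1) = 1 := by
      by_cases hex : ∃ v₀ : Vtx σ, w = (cmk σ α B v₀).out
      · obtain ⟨v₀, hv₀⟩ := hex
        have hcmkw : ∀ v : Vtx σ, w = (cmk σ α B v).out → cmk σ α B w = cmk σ α B v := by
          intro v hv
          rw [hv]
          exact Quotient.out_eq _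
        have hcond : ∀ v : Vtx σ, (w = (cmk σ α B v).out) ↔ cmk σ α B v = cmk σ α B w := by
          intro v
          constructor
          · intro hv; exact (hcmkw v hv).symm
          · intro hv
            rw [hv, hcmkw v₀ hv₀]
            exact hv₀
        rw [Finset.prod_congr rfl (fun v _ => if_congr (hcond v) rfl rfl)]
        rw [← Finset.prod_filter, Finset.prod_inv_distrib]
        have : ∏ v ∈ univ.filter (fun v => cmk σ α B v = cmk σ α B w), x v = 1 :=
          congrFun hx (cmk σ α B w)
        rw [this, inv_one]
      · exact Finset.prod_eq_one fun v _ => if_neg (fun h => hex ⟨v, h⟩)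
    rw [h1, h2, mul_one]

variable [Fintype G]

lemma card_flows_mul (hinv : ∀ d, α (α d) = d) (hfpf : ∀ d, α d ≠ d) (B : Set (Edg α)) :
    Nat.card {κ : D → G // IsGFlow σ α κ ∧ ∀ d, emk α d ∉ B → κ d = 1}
        * Nat.card G ^ σ.cycleCount
      = Nat.card G ^ (Nat.card B + Nat.card (Comp σ α B)) := by
  set f := (bnd σ G).domRestrict (labelSub α G B) with hf
  -- flows ≃ ker f
  have e1 : Nat.card {κ : D → G // IsGFlow σ α κ ∧ ∀ d, emk α d ∉ B → κ d = 1}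
      = Nat.card f.ker := by
    refine Nat.card_congr ⟨fun κ => ⟨⟨κ.1, κ.2.1.1, κ.2.2⟩, (isGFlow_iff κ.1).mp κ.2.1 |>.2⟩,
      fun κ => ⟨κ.1.1, (isGFlow_iff κ.1.1).mpr ⟨κ.1.2.1, κ.2⟩, κ.1.2.2⟩, fun κ => rfl, fun κ => rfl⟩
  have e2 : Nat.card (labelSub α G B) = Nat.card f.range * Nat.card f.ker := by
    rw [Subgroup.card_eq_card_quotient_mul_card_subgroup f.ker,
      Nat.card_congr (QuotientGroup.quotientKerEquivRange f).toEquiv]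
  have e3 : Nat.card f.range = Nat.card (Phi σ α G B).ker := by
    rw [hf, range_eq hinv hfpf]
  have e4 : Nat.card (Phi σ α G B).ker * Nat.card G ^ Nat.card (Comp σ α B)
      = Nat.card G ^ σ.cycleCount := by
    have h5 : Nat.card (Vtx σ → G)
        = Nat.card ((Phi σ α G B).range) * Nat.card (Phi σ α G B).ker := by
      rw [Subgroup.card_eq_card_quotient_mul_card_subgroup (Phi σ α G B).ker,
        Nat.card_congr (QuotientGroup.quotientKerEquivRange (Phi σ α G B)).toEquiv]
    have h6 : ((Phi σ α G B)).range = ⊤ :=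
      MonoidHom.range_eq_top.mpr (phi_surjective σ α B)
    rw [h6] at h5
    rw [Nat.card_congr Subgroup.topEquiv.toEquiv] at h5
    rw [Nat.card_fun, Nat.card_fun] at h5
    rw [show Nat.card (Vtx σ) = σ.cycleCount from rfl] at h5
    rw [mul_comm]
    exact h5.symm
  rw [e1, ← e4, ← mul_assoc, mul_comm (Nat.card f.ker), ← e3, ← e2,
    card_labelSub hinv hfpf B, pow_add]

/-- Edge support of a labelling. -/
def Esupp (α : Perm D) (κ : D → G) : Set (Edg α) := {e | κ e.out ≠ 1}

lemma suppIn_iff (hinv : ∀ d, α (α d) = d) {κ : D → G} (hκ : IsGLabelling α κ)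
    (B : Set (Edg α)) : (∀ d, emk α d ∉ B → κ d = 1) ↔ Esupp α κ ⊆ B := by
  constructor
  · intro h e he
    by_contra hB
    exact he (h e.out (by rw [show emk α e.out = e from Quotient.out_eq e]; exact hB))
  · intro h d hd
    by_contra hne
    have hout : κ (emk α d).out ≠ 1 := by
      rcases eq_out_or hinv d with hc | hc
      · rw [← hc]; exact hne
      · rw [hc, hκ _] at hne
        exact fun h1 => hne (by rw [h1, inv_one])
    exact hd (h hout)

lemma nowhere_iff (hinv : ∀ d, α (α d) = d) {κ : D → G} (hκ : IsGLabelling α κ) :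
    (∀ d, κ d ≠ 1) ↔ Esupp α κ = Set.univ := by
  constructor
  · intro h
    exact Set.eq_univ_of_forall fun e => h e.out
  · intro h d
    rcases eq_out_or hinv d with hc | hc
    · rw [hc]
      exact (h ▸ Set.mem_univ (emk α d) : emk α d ∈ Esupp α κ)
    · rw [hc, hκ _]
      have : κ (emk α d).out ≠ 1 := (h ▸ Set.mem_univ (emk α d) : emk α d ∈ Esupp α κ)
      exact fun h1 => this (by rwa [inv_eq_one] at h1)

lemma sum_compl_ite (X : Type) [Fintype X] (S : Set X) :
    ∑ B : Set X, (-1 : ℂ) ^ (Nat.card ↥Bᶜ) * (if S ⊆ B then 1 else 0)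
      = if S = Set.univ then 1 else 0 := by
  classical
  have e1 : ∑ B : Set X, (-1 : ℂ) ^ (Nat.card ↥Bᶜ) * (if S ⊆ B then 1 else 0)
      = ∑ C : Set X, (-1 : ℂ) ^ (Nat.card ↥C) * (if C ⊆ Sᶜ then 1 else 0) := by
    rw [← Equiv.sum_comp (Equiv.mk compl compl compl_compl compl_compl)
      (fun B : Set X => (-1 : ℂ) ^ (Nat.card ↥Bᶜ) * (if S ⊆ B then 1 else 0))]
    refine Finset.sum_congr rfl fun C _ => ?_
    simp only [Equiv.coe_fn_mk, compl_compl]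
    exact congrArg _ (if_congr Set.subset_compl_comm rfl rfl)
  rw [e1, ← Equiv.sum_comp (Fintype.finsetEquivSet (α := X))
      (fun C => (-1 : ℂ) ^ (Nat.card ↥C) * (if C ⊆ Sᶜ then 1 else 0))]
  have e2 : ∀ c : Finset X,
      (-1 : ℂ) ^ (Nat.card ↥(Fintype.finsetEquivSet c)) *
        (if (Fintype.finsetEquivSet c : Set X) ⊆ Sᶜ then 1 else 0)
      = if c ⊆ Sᶜ.toFinset then (-1 : ℂ) ^ c.card else 0 := by
    intro c
    rw [show (Fintype.finsetEquivSet c : Set X) = ↑c from rfl]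
    rw [show Nat.card ↥(↑c : Set X) = c.card by
      rw [Nat.card_coe_set_eq, Set.ncard_coe_finset]]
    rw [show ((↑c : Set X) ⊆ Sᶜ) = (c ⊆ Sᶜ.toFinset) from propext Set.subset_toFinset.symm]
    rw [mul_ite, mul_one, mul_zero]
    congr!
  rw [Finset.sum_congr rfl fun c _ => e2 c, ← Finset.sum_filter,
    show Finset.univ.filter (fun c : Finset X => c ⊆ Sᶜ.toFinset) = Sᶜ.toFinset.powerset by
      ext c; simp [Finset.mem_powerset]]
  have e3 : (∑ c ∈ Sᶜ.toFinset.powerset, (-1 : ℂ) ^ c.card)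
      = ((∑ c ∈ Sᶜ.toFinset.powerset, (-1 : ℤ) ^ c.card : ℤ) : ℂ) := by
    push_cast; rfl
  rw [e3, Finset.sum_powerset_neg_one_pow_card]
  by_cases h : S = Set.univ
  · have : Sᶜ.toFinset = ∅ := by simp [h]
    simp [h, this]
  · have : ¬ Sᶜ.toFinset = ∅ := by
      simp only [Set.toFinset_eq_empty, Set.compl_empty_iff]
      exact h
    simp [h, this]


variable [Fintype G]

lemma card_flows_complex (hinv : ∀ d, α (α d) = d) (hfpf : ∀ d, α d ≠ d) (B : Set (Edg α)) :
    (Nat.card {κ : D → G // IsGFlow σ α κ ∧ ∀ d, emk α d ∉ B → κ d = 1} : ℂ)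
      = (Nat.card G : ℂ) ^ ((Nat.card ↥B : ℤ) - (σ.cycleCount : ℤ)
          + (Nat.card (Comp σ α B) : ℤ)) := by
  have h := card_flows_mul (G := G) (σ := σ) hinv hfpf B
  have hn : (Nat.card G : ℂ) ≠ 0 := by
    have : Nat.card G ≠ 0 := (Nat.card_pos (α := G)).ne'
    exact_mod_cast this
  have hc : (Nat.card {κ : D → G // IsGFlow σ α κ ∧ ∀ d, emk α d ∉ B → κ d = 1} : ℂ)
        * (Nat.card G : ℂ) ^ σ.cycleCount
      = (Nat.card G : ℂ) ^ (Nat.card ↥B + Nat.card (Comp σ α B)) := by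
    exact_mod_cast congrArg (Nat.cast (R := ℂ)) h
  have hv : ((Nat.card G : ℂ) ^ σ.cycleCount) ≠ 0 := pow_ne_zero _ hn
  refine mul_right_cancel₀ hv ?_
  rw [hc, ← zpow_natCast (Nat.card G : ℂ) σ.cycleCount,
    ← zpow_natCast (Nat.card G : ℂ) (Nat.card ↥B + Nat.card (Comp σ α B)), ← zpow_add₀ hn]
  congr 1
  push_cast
  ring

lemma card_and_eq_sum (p q : (D → G) → Prop) [Fintype {κ : D → G // p κ}] :
    (Nat.card {κ : D → G // p κ ∧ q κ} : ℂ)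
      = ∑ k : {κ : D → G // p κ}, (if q k.1 then 1 else 0) := by
  classical
  rw [Nat.card_congr (Equiv.subtypeSubtypeEquivSubtypeInter p q).symm]
  rw [Nat.card_eq_fintype_card, Fintype.card_subtype]
  rw [Finset.card_filter]
  push_cast
  refine Finset.sum_congr rfl fun k _ => ?_
  split_ifs <;> simp

end FlowAux

open FlowAux in
open scoped Classical in
/-- For a finite abelian group `G`, the number of nowhere-identity `G`-flows on a connected
combinatorial map `M = (D, σ, α)` equals `∑_{B ⊆ E} (−1)^{|E∖B|} |G|^{|B|−|V|+c(B)}`. -/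
theorem count_nowhere_identity_flows_abelian
    {D : Type} [Fintype D] [Nonempty D] (σ α : Equiv.Perm D)
    (hinv : ∀ d, α (α d) = d) (hfpf : ∀ d, α d ≠ d)
    (hconn : MapConnected σ α)
    {G : Type} [CommGroup G] [Fintype G] :
    (Nat.card {κ : D → G // IsGFlow σ α κ ∧ ∀ d, κ d ≠ 1} : ℂ)
      = ∑ᶠ B : Set (Quotient α.cycleSetoid),
          (-1 : ℂ) ^ (Nat.card ↥Bᶜ) *
            (Nat.card G : ℂ) ^ ((Nat.card ↥B : ℤ) - (σ.cycleCount : ℤ)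
              + (Nat.card (Quotient (Relation.EqvGen.setoid (spanningRel σ α B))) : ℤ)) := by
  rw [finsum_eq_sum_of_fintype]
  have hterm : ∀ B : Set (Edg α),
      (Nat.card G : ℂ) ^ ((Nat.card ↥B : ℤ) - (σ.cycleCount : ℤ)
          + (Nat.card (Comp σ α B) : ℤ))
        = ∑ k : {κ : D → G // IsGFlow σ α κ}, (if Esupp α k.1 ⊆ B then (1:ℂ) else 0) := by
    intro B
    rw [← card_flows_complex hinv hfpf B,
      card_and_eq_sum (fun κ => IsGFlow σ α κ) (fun κ => ∀ d, emk α d ∉ B → κ d = 1)]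
    refine Finset.sum_congr rfl fun k _ => ?_
    by_cases h : Esupp α k.1 ⊆ B
    · rw [if_pos h, if_pos ((suppIn_iff hinv k.2.1 B).mpr h)]
    · rw [if_neg h, if_neg (fun hh => h ((suppIn_iff hinv k.2.1 B).mp hh))]
  calc (Nat.card {κ : D → G // IsGFlow σ α κ ∧ ∀ d, κ d ≠ 1} : ℂ)
      = ∑ k : {κ : D → G // IsGFlow σ α κ},
          (if Esupp α k.1 = Set.univ then (1:ℂ) else 0) := by
        rw [card_and_eq_sum (fun κ => IsGFlow σ α κ) (fun κ => ∀ d, κ d ≠ 1)]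
        refine Finset.sum_congr rfl fun k _ => ?_
        by_cases h : Esupp α k.1 = Set.univ
        · rw [if_pos h, if_pos ((nowhere_iff hinv k.2.1).mpr h)]
        · rw [if_neg h, if_neg (fun hh => h ((nowhere_iff hinv k.2.1).mp hh))]
    _ = ∑ k : {κ : D → G // IsGFlow σ α κ}, ∑ B : Set (Edg α),
          (-1:ℂ)^(Nat.card ↥Bᶜ) * (if Esupp α k.1 ⊆ B then 1 else 0) :=
        Finset.sum_congr rfl fun k _ => (sum_compl_ite _ (Esupp α k.1)).symm
    _ = ∑ B : Set (Edg α), ∑ k : {κ : D → G // IsGFlow σ α κ},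
          (-1:ℂ)^(Nat.card ↥Bᶜ) * (if Esupp α k.1 ⊆ B then 1 else 0) := Finset.sum_comm
    _ = _ := by
        refine Finset.sum_congr rfl fun B _ => ?_
        rw [← Finset.mul_sum, ← hterm B]
end

section
/- Let G be a finite group and M = (D, σ, α) a connected combinatorial map. For a proper G-coloring c of M, define κ_c : D → G by κ_c(d) := c(tail(d))·c(head(d))⁻¹. Then κ_c is a nowhere-identity global G-tension on M; moreover the map c ↦ κ_c is a surjection from the set of proper G-colorings of M onto the set of nowhere-identity global G-tensions on M, and every fiber of this map has exactly |G| elements. -/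
open Equiv

section Aux
variable {D G : Type} [Group G]

abbrev Qm (σ : Perm D) (d : D) : Quotient σ.cycleSetoid := Quotient.mk σ.cycleSetoid d

lemma q_eq {σ : Perm D} {a b : D} (h : σ.SameCycle a b) : Qm σ a = Qm σ b := Quotient.sound h

lemma q_exact {σ : Perm D} {a b : D} (h : Qm σ a = Qm σ b) : σ.SameCycle a b := Quotient.exact h

lemma q_sigma (σ : Perm D) (d : D) : Qm σ (σ d) = Qm σ d := q_eq ⟨-1, by simp⟩

lemma prod_telescope (σ α : Perm D) (c : Quotient σ.cycleSetoid → G) :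
    ∀ (W : List D) (h : W ≠ []), W.Chain' (fun a b => σ.SameCycle (α a) b) →
      (W.map fun d => c (Qm σ d) * (c (Qm σ (α d)))⁻¹).prod
        = c (Qm σ (W.head h)) * (c (Qm σ (α (W.getLast h))))⁻¹
  | [], h, _ => absurd rfl h
  | [d], _, _ => by simp
  | d :: e :: t, _, hc => by
    rw [List.Chain', List.isChain_cons_cons] at hc
    have ih := prod_telescope σ α c (e :: t) (by simp) hc.2
    have hde : Qm σ (α d) = Qm σ e := q_eq hc.1
    simp only [List.map_cons, List.prod_cons, List.head_cons] at ih ⊢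
    have hlast : (d :: e :: t).getLast (by simp) = (e :: t).getLast (by simp) :=
      List.getLast_cons (by simp)
    rw [hlast, ih, hde]
    group

lemma rev_map_prod (α : Perm D) (κ : D → G) (hl : IsGLabelling α κ) :
    ∀ l : List D, ((l.reverse.map α).map κ).prod = ((l.map κ).prod)⁻¹
  | [] => by simp
  | d :: t => by
    simp only [List.reverse_cons, List.map_append, List.prod_append, List.map_cons,
      List.prod_cons, List.map_nil, List.prod_nil, mul_one, mul_inv_rev]
    rw [rev_map_prod α κ hl t, hl d]

/-- A walk in the map from vertex `u` to vertex `v`. -/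
def WalkFromTo (σ α : Perm D) (W : List D) (u v : Quotient σ.cycleSetoid) : Prop :=
  ∃ h : W ≠ [], W.Chain' (fun a b => σ.SameCycle (α a) b) ∧
    Qm σ (W.head h) = u ∧ Qm σ (α (W.getLast h)) = v

lemma height_unique (σ α : Perm D) (hinv : ∀ d, α (α d) = d) (κ : D → G)
    (ht : IsGlobalTension σ α κ) {W W' : List D} {u v : Quotient σ.cycleSetoid}
    (hW : WalkFromTo σ α W u v) (hW' : WalkFromTo σ α W' u v) :
    (W.map κ).prod = (W'.map κ).prod := by
  obtain ⟨h1, hc1, hu1, hv1⟩ := hW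
  obtain ⟨h2, hc2, hu2, hv2⟩ := hW'
  have h2r : W'.reverse.map α ≠ [] := by simp [h2]
  have hX : W ++ W'.reverse.map α ≠ [] := by simp [h1]
  have hheadX : (W ++ W'.reverse.map α).head hX = W.head h1 :=
    List.head_append_of_ne_nil h1
  have hlastX : (W ++ W'.reverse.map α).getLast hX = α (W'.head h2) := by
    rw [List.getLast_append, dif_neg (by simpa using h2r), List.getLast_map,
      List.getLast_reverse]
  have closed : IsClosedWalk σ α (W ++ W'.reverse.map α) := by
    refine ⟨hX, ?_, ?_⟩
    · rw [List.Chain', List.isChain_append]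
      refine ⟨hc1, ?_, ?_⟩
      · rw [List.isChain_map, List.isChain_reverse]
        exact hc2.imp (fun a b hab => by
          show σ.SameCycle (α (α b)) (α a)
          rw [hinv]; exact hab.symm)
      · intro x hx y hy
        rw [List.getLast?_eq_getLast h1, Option.mem_some_iff] at hx
        have hyv : y = α (W'.getLast h2) := by
          rw [List.head?_eq_head h2r, Option.mem_some_iff] at hy
          rw [← hy, List.head_map, List.head_reverse]
        subst hx hyv
        exact q_exact (hv1.trans hv2.symm)
    · rw [hheadX, hlastX, hinv]
      exact q_exact (hu2.trans hu1.symm)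
  have h1p := ht.2 _ closed
  rw [List.map_append, List.prod_append, rev_map_prod α κ ht.1 W'] at h1p
  exact eq_of_mul_inv_eq_one h1p

lemma walk_extend (σ α : Perm D) {W : List D} {u : Quotient σ.cycleSetoid} {d : D}
    (hW : WalkFromTo σ α W u (Qm σ d)) :
    WalkFromTo σ α (W ++ [d]) u (Qm σ (α d)) := by
  obtain ⟨h, hc, hu, hv⟩ := hW
  have hne : W ++ [d] ≠ [] := by simp
  refine ⟨hne, ?_, ?_, ?_⟩
  · rw [List.Chain', List.isChain_append]
    refine ⟨hc, List.isChain_singleton d, ?_⟩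
    intro x hx y hy
    rw [List.getLast?_eq_getLast h, Option.mem_some_iff] at hx
    simp only [List.head?_cons, Option.mem_some_iff] at hy
    subst hx hy
    exact q_exact hv
  · rw [List.head_append_of_ne_nil h]
    exact hu
  · have hl : (W ++ [d]).getLast hne = d := List.getLast_concat
    rw [hl]

lemma reach_all (σ α : Perm D) (hconn : MapConnected σ α)
    (S : Set D) (hσ : ∀ d, σ d ∈ S ↔ d ∈ S) (hα : ∀ d, α d ∈ S ↔ d ∈ S)
    (d0 : D) (h0 : d0 ∈ S) : ∀ d, d ∈ S := by
  have key : ∀ g ∈ Subgroup.closure ({σ, α} : Set (Perm D)), ∀ x, g x ∈ S ↔ x ∈ S := by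
    intro g hg
    refine Subgroup.closure_induction (p := fun g _ => ∀ x, g x ∈ S ↔ x ∈ S)
      ?_ (by simp) ?_ ?_ hg
    · intro x hx
      simp only [Set.mem_insert_iff, Set.mem_singleton_iff] at hx
      rcases hx with rfl | rfl
      exacts [hσ, hα]
    · intro a b _ _ ha hb x
      rw [Perm.mul_apply]
      exact (ha (b x)).trans (hb x)
    · intro a _ ha x
      have := (ha (a⁻¹ x)).symm
      rwa [show a (a⁻¹ x) = x from a.apply_symm_apply x] at this
  intro d
  obtain ⟨g, hg, rfl⟩ := hconn d0 d
  exact (key g hg d0).mpr h0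

end Aux

/-- Proper `G`-colorings of a connected combinatorial map correspond to nowhere-identity
global `G`-tensions via `c ↦ κ_c`, `κ_c(d) = c(tail d)·c(head d)⁻¹`, which is a surjection
all of whose fibers have exactly `|G|` elements. -/



theorem coloring_global_tension_correspondence
    {D : Type} [Fintype D] [Nonempty D] (σ α : Equiv.Perm D)
    (hinv : ∀ d, α (α d) = d) (hfpf : ∀ d, α d ≠ d)
    (hconn : MapConnected σ α)
    {G : Type} [Group G] [Fintype G]
    (κof : {c : Quotient σ.cycleSetoid → G //
        ∀ d, c (Quotient.mk σ.cycleSetoid d) ≠ c (Quotient.mk σ.cycleSetoid (α d))} → D → G)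
    (hκof : ∀ c d, κof c d =
      c.1 (Quotient.mk σ.cycleSetoid d) * (c.1 (Quotient.mk σ.cycleSetoid (α d)))⁻¹) :
    (∀ c, IsGlobalTension σ α (κof c) ∧ ∀ d, κof c d ≠ 1) ∧
    (∀ κ : D → G, IsGlobalTension σ α κ → (∀ d, κ d ≠ 1) →
      (∃ c, κof c = κ) ∧ Nat.card {c // κof c = κ} = Nat.card G) := by
  classical
  have part1 : ∀ c, IsGlobalTension σ α (κof c) ∧ ∀ d, κof c d ≠ 1 := by
    intro c
    have hmap : ∀ W : List D, W.map (κof c)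
        = W.map (fun d => c.1 (Qm σ d) * (c.1 (Qm σ (α d)))⁻¹) :=
      fun W => List.map_congr_left fun d _ => hκof c d
    refine ⟨⟨?_, ?_⟩, ?_⟩
    · intro d
      rw [hκof, hκof, hinv d, mul_inv_rev, inv_inv]
    · intro W hW
      obtain ⟨h, hc, hcl⟩ := hW
      rw [hmap, prod_telescope σ α c.1 W h hc, q_eq hcl]
      simp
    · intro d h1
      rw [hκof] at h1
      exact c.2 d (mul_inv_eq_one.mp h1)
  refine ⟨part1, ?_⟩
  intro κ ht hni
  obtain ⟨d0⟩ := ‹Nonempty D›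
  set S : Set D := {d | ∃ W, WalkFromTo σ α W (Qm σ d0) (Qm σ d)} with hS
  have hσS : ∀ d, σ d ∈ S ↔ d ∈ S := by
    intro d
    simp only [hS, Set.mem_setOf_eq, q_sigma]
  have hαS : ∀ d, α d ∈ S ↔ d ∈ S := by
    intro d
    constructor
    · rintro ⟨W, hW⟩
      refine ⟨W ++ [α d], ?_⟩
      have := walk_extend σ α hW
      rwa [hinv d] at this
    · rintro ⟨W, hW⟩
      exact ⟨W ++ [d], walk_extend σ α hW⟩
  have h0 : d0 ∈ S := (hαS d0).mp ⟨[d0], ⟨by simp, List.isChain_singleton d0, rfl, rfl⟩⟩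
  have hreachD := reach_all σ α hconn S hσS hαS d0 h0
  have hreach : ∀ v : Quotient σ.cycleSetoid, ∃ W, WalkFromTo σ α W (Qm σ d0) v :=
    fun v => Quotient.inductionOn v fun d => hreachD d
  set c0 : Quotient σ.cycleSetoid → G := fun v => (((hreach v).choose.map κ).prod)⁻¹ with hc0
  have key : ∀ d, κ d = c0 (Qm σ d) * (c0 (Qm σ (α d)))⁻¹ := by
    intro d
    have hWd := (hreach (Qm σ d)).choose_spec
    have hWαd := (hreach (Qm σ (α d))).choose_spec
    have hext := walk_extend σ α hWd
    have hu := height_unique σ α hinv κ ht hWαd hext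
    rw [List.map_append, List.prod_append] at hu
    simp only [hc0]
    rw [hu]
    simp [mul_assoc]
  have hproper : ∀ d, c0 (Qm σ d) ≠ c0 (Qm σ (α d)) := by
    intro d h
    exact hni d (by rw [key d, h]; simp)
  have hκsub : κof ⟨c0, hproper⟩ = κ := funext fun d => by
    rw [hκof]; exact (key d).symm
  refine ⟨⟨⟨c0, hproper⟩, hκsub⟩, ?_⟩
  let Φ : G → {c // κof c = κ} := fun g =>
    ⟨⟨fun v => c0 v * g, fun d h => hproper d (mul_right_cancel h)⟩, funext fun d => by
      rw [hκof]
      show (c0 (Qm σ d) * g) * (c0 (Qm σ (α d)) * g)⁻¹ = κ d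
      rw [key d]
      group⟩
  have hinj : Function.Injective Φ := by
    intro g g' hg
    have := congrFun (congrArg (fun c => c.1.1) hg) (Qm σ d0)
    exact mul_left_cancel this
  have hsurj : Function.Surjective Φ := by
    rintro ⟨⟨c', hp'⟩, hc'⟩
    set f : Quotient σ.cycleSetoid → G := fun v => (c0 v)⁻¹ * c' v with hf0
    have hf : ∀ d, f (Qm σ d) = f (Qm σ (α d)) := by
      intro d
      have h1 : κ d = c' (Qm σ d) * (c' (Qm σ (α d)))⁻¹ := by
        rw [← hc', hκof]
      have hX : c0 (Qm σ d) * (c0 (Qm σ (α d)))⁻¹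
          = c' (Qm σ d) * (c' (Qm σ (α d)))⁻¹ := (key d).symm.trans h1
      have h2 : c' (Qm σ d)
          = c0 (Qm σ d) * (c0 (Qm σ (α d)))⁻¹ * c' (Qm σ (α d)) := by
        rw [hX]; group
      simp only [hf0, h2]
      group
    set T : Set D := {d | f (Qm σ d) = f (Qm σ d0)} with hT
    have hσT : ∀ d, σ d ∈ T ↔ d ∈ T := by
      intro d
      simp only [hT, Set.mem_setOf_eq, q_sigma]
    have hαT : ∀ d, α d ∈ T ↔ d ∈ T := by
      intro d
      simp only [hT, Set.mem_setOf_eq, ← hf d]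
    have hTall := reach_all σ α hconn T hσT hαT d0 rfl
    have hconst : ∀ v, f v = f (Qm σ d0) := fun v => Quotient.inductionOn v fun d => hTall d
    refine ⟨f (Qm σ d0), ?_⟩
    have hc'eq : (fun v => c0 v * f (Qm σ d0)) = c' := funext fun v => by
      rw [← hconst v]
      simp [hf0, ← mul_assoc]
    exact Subtype.ext (Subtype.ext hc'eq)
  exact (Nat.card_congr (Equiv.ofBijective Φ ⟨hinj, hsurj⟩)).symm
end

section
/- Let G be a finite group and M = (D, σ, α) a connected combinatorial map with |V(M)| − |E(M)| + |F(M)| = 2 (i.e. M is planar). For a proper G-coloring c of the dual map M* = (D, σ∘α, α), define κ_c : D → G by κ_c(d) := c(tail*(d))·c(head*(d))⁻¹, where tail* and head* denote tail and head taken in M*. Then κ_c is a nowhere-identity G-flow on M; moreover the map c ↦ κ_c is a surjection from the set of proper G-colorings of M* onto the set of nowhere-identity G-flows on M, and every fiber of this map has exactly |G| elements. -/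
open Equiv

set_option linter.unusedSectionVars false
set_option maxHeartbeats 1000000

open Function

lemma perm_apply_inv_self' {X : Type*} (f : Perm X) (x : X) : f (f⁻¹ x) = x := f.apply_symm_apply x

lemma perm_inv_apply_self' {X : Type*} (f : Perm X) (x : X) : f⁻¹ (f x) = x := f.symm_apply_apply x

section Orb
variable {X : Type} [Fintype X]

def orbRel (S : Set (Perm X)) (z w : X) : Prop := ∃ g ∈ Subgroup.closure S, g z = w

lemma orbRel_refl (S : Set (Perm X)) (z : X) : orbRel S z z := ⟨1, Subgroup.one_mem _, rfl⟩

lemma orbRel_symm {S : Set (Perm X)} {z w : X} (h : orbRel S z w) : orbRel S w z := by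
  obtain ⟨g, hg, h⟩ := h
  exact ⟨g⁻¹, Subgroup.inv_mem _ hg, by simp [← h]⟩

lemma orbRel_trans {S : Set (Perm X)} {z w v : X} (h : orbRel S z w) (h' : orbRel S w v) :
    orbRel S z v := by
  obtain ⟨g, hg, rfl⟩ := h
  obtain ⟨g', hg', rfl⟩ := h'
  exact ⟨g' * g, Subgroup.mul_mem _ hg' hg, rfl⟩

def orbSetoid (S : Set (Perm X)) : Setoid X :=
  ⟨orbRel S, ⟨orbRel_refl S, orbRel_symm, orbRel_trans⟩⟩

lemma sameCycle_iff_orb (π : Perm X) (z w : X) :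
    π.SameCycle z w ↔ orbRel {π} z w := by
  constructor
  · rintro ⟨i, rfl⟩
    exact ⟨π ^ i, zpow_mem (Subgroup.subset_closure (Set.mem_singleton π)) i, rfl⟩
  · rintro ⟨g, hg, rfl⟩
    obtain ⟨n, rfl⟩ := Subgroup.mem_closure_singleton.1 hg
    exact ⟨n, rfl⟩

lemma cycleCount_eq_orb (π : Perm X) :
    π.cycleCount = Nat.card (Quotient (orbSetoid {π})) :=
  Nat.card_congr (Quotient.congrRight (fun z w => sameCycle_iff_orb π z w))
end Orb

section Join
variable {X : Type} [Fintype X] [DecidableEq X]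

def joinRel (S : Set (Perm X)) (a b : X) (z w : X) : Prop :=
  orbRel S z w ∨ ((orbRel S z a ∨ orbRel S z b) ∧ (orbRel S w a ∨ orbRel S w b))

lemma joinRel_refl (S : Set (Perm X)) (a b z : X) : joinRel S a b z z :=
  Or.inl (orbRel_refl S z)

lemma joinRel_symm {S : Set (Perm X)} {a b z w : X} (h : joinRel S a b z w) :
    joinRel S a b w z := by
  rcases h with h | ⟨h1, h2⟩
  · exact Or.inl (orbRel_symm h)
  · exact Or.inr ⟨h2, h1⟩

lemma joinRel_trans {S : Set (Perm X)} {a b z w v : X} (h : joinRel S a b z w)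
    (h' : joinRel S a b w v) : joinRel S a b z v := by
  rcases h with h | ⟨h1, h2⟩
  · rcases h' with h' | ⟨h1', h2'⟩
    · exact Or.inl (orbRel_trans h h')
    · exact Or.inr ⟨Or.imp (orbRel_trans h) (orbRel_trans h) h1', h2'⟩
  · rcases h' with h' | ⟨h1', h2'⟩
    · exact Or.inr ⟨h1, Or.imp (fun hh => orbRel_trans (orbRel_symm h') hh)
        (fun hh => orbRel_trans (orbRel_symm h') hh) h2⟩
    · exact Or.inr ⟨h1, h2'⟩

lemma orbRel_mono {S S' : Set (Perm X)} (hs : S ⊆ S') {z w : X} (h : orbRel S z w) :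
    orbRel S' z w := by
  obtain ⟨g, hg, rfl⟩ := h
  exact ⟨g, Subgroup.closure_mono hs hg, rfl⟩

lemma orbRel_swap_self {S : Set (Perm X)} (a b : X) :
    orbRel (insert (swap a b) S) a b :=
  ⟨swap a b, Subgroup.subset_closure (Set.mem_insert _ _), Equiv.swap_apply_left a b⟩

lemma orbRel_insert_swap {S : Set (Perm X)} {a b : X} (z w : X) :
    orbRel (insert (swap a b) S) z w ↔ joinRel S a b z w := by
  constructor
  · rintro ⟨g, hg, rfl⟩
    induction hg using Subgroup.closure_induction generalizing z with
    | mem x hx =>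
      rcases hx with rfl | hx
      · rcases eq_or_ne z a with rfl | hza
        · refine Or.inr ⟨Or.inl (orbRel_refl S z), Or.inr ?_⟩
          rw [Equiv.swap_apply_left]; exact orbRel_refl S b
        · rcases eq_or_ne z b with rfl | hzb
          · refine Or.inr ⟨Or.inr (orbRel_refl S z), Or.inl ?_⟩
            rw [Equiv.swap_apply_right]; exact orbRel_refl S a
          · rw [swap_apply_of_ne_of_ne hza hzb]; exact joinRel_refl S a b z
      · exact Or.inl ⟨x, Subgroup.subset_closure hx, rfl⟩
    | one => simpa using joinRel_refl S a b z
    | mul x y hx hy ihx ihy =>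
      have h1 := ihy z
      have h2 := ihx (y z)
      simpa using joinRel_trans h1 h2
    | inv x hx ihx =>
      have := ihx (x⁻¹ z)
      simp only [perm_apply_inv_self'] at this
      exact joinRel_symm this
  · have hab : orbRel (insert (swap a b) S) a b := orbRel_swap_self a b
    have mono : ∀ {z w : X}, orbRel S z w → orbRel (insert (swap a b) S) z w :=
      fun h => orbRel_mono (Set.subset_insert _ _) h
    rintro (h | ⟨h1 | h1, h2 | h2⟩)
    · exact mono h
    · exact orbRel_trans (mono h1) (orbRel_symm (mono h2))
    · exact orbRel_trans (orbRel_trans (mono h1) hab) (orbRel_symm (mono h2))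
    · exact orbRel_trans (orbRel_trans (mono h1) (orbRel_symm hab)) (orbRel_symm (mono h2))
    · exact orbRel_trans (mono h1) (orbRel_symm (mono h2))

lemma card_orb_insert_swap_of_rel {S : Set (Perm X)} {a b : X} (h : orbRel S a b) :
    Nat.card (Quotient (orbSetoid (insert (swap a b) S))) =
      Nat.card (Quotient (orbSetoid S)) := by
  refine Nat.card_congr (Quotient.congrRight fun z w => ?_)
  show orbRel (insert (swap a b) S) z w ↔ orbRel S z w
  rw [orbRel_insert_swap]
  constructor
  · rintro (hh | ⟨h1 | h1, h2 | h2⟩)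
    · exact hh
    · exact orbRel_trans h1 (orbRel_symm h2)
    · exact orbRel_trans (orbRel_trans h1 h) (orbRel_symm h2)
    · exact orbRel_trans (orbRel_trans h1 (orbRel_symm h)) (orbRel_symm h2)
    · exact orbRel_trans h1 (orbRel_symm h2)
  · exact Or.inl

lemma card_orb_insert_swap_of_not_rel {S : Set (Perm X)} {a b : X}
    (h : ¬ orbRel S a b) :
    Nat.card (Quotient (orbSetoid S)) =
      Nat.card (Quotient (orbSetoid (insert (swap a b) S))) + 1 := by
  classical
  set E := orbSetoid S with hE
  set E' := orbSetoid (insert (swap a b) S) with hE'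
  have mono : ∀ {z w : X}, orbRel S z w → orbRel (insert (swap a b) S) z w :=
    fun hh => orbRel_mono (Set.subset_insert _ _) hh
  let q : Quotient E → Quotient E' := Quotient.map id (fun z w hh => mono hh)
  have hq : ∀ z : X, q (Quotient.mk E z) = Quotient.mk E' z := fun z => rfl
  have key : Function.Bijective
      (fun u : {u : Quotient E // u ≠ Quotient.mk E b} => q u.1) := by
    constructor
    · rintro ⟨u, hu⟩ ⟨v, hv⟩ huv
      obtain ⟨z, rfl⟩ := Quotient.exists_rep u
      obtain ⟨w, rfl⟩ := Quotient.exists_rep v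
      simp only [hq] at huv
      have := (orbRel_insert_swap z w).1 (Quotient.exact huv)
      rcases this with hh | ⟨h1 | h1, h2 | h2⟩
      · exact Subtype.ext (Quotient.sound hh)
      · exact Subtype.ext (Quotient.sound (orbRel_trans h1 (orbRel_symm h2)))
      · exact absurd (Quotient.sound h2 : Quotient.mk E w = _) hv
      · exact absurd (Quotient.sound h1 : Quotient.mk E z = _) hu
      · exact absurd (Quotient.sound h1 : Quotient.mk E z = _) hu
    · intro y
      obtain ⟨z, rfl⟩ := Quotient.exists_rep y
      by_cases hzb : orbRel S z b
      · refine ⟨⟨Quotient.mk E a, fun hc => h (Quotient.exact hc)⟩, ?_⟩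
        simp only [hq]
        exact Quotient.sound (orbRel_trans (orbRel_swap_self a b) (orbRel_symm (mono hzb)))
      · exact ⟨⟨Quotient.mk E z, fun hc => hzb (Quotient.exact hc)⟩, rfl⟩
  have h2 : Nat.card {u : Quotient E // u ≠ Quotient.mk E b} = Nat.card (Quotient E') :=
    Nat.card_eq_of_bijective _ key
  have h3 : Nat.card (Quotient E) =
      Nat.card {u : Quotient E // u = Quotient.mk E b} +
      Nat.card {u : Quotient E // u ≠ Quotient.mk E b} := by
    rw [← Nat.card_sum]
    exact Nat.card_congr (Equiv.sumCompl _).symm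
  rw [h3, h2, Nat.card_unique, Nat.add_comm]
end Join

section Swap
variable {X : Type} [Fintype X] [DecidableEq X]

lemma perm_pow_apply (π : Perm X) (n : ℕ) (z : X) : (π ^ n) z = (⇑π)^[n] z := by
  rw [Equiv.Perm.coe_pow]

lemma perm_pow_minPeriod (π : Perm X) (z : X) :
    (π ^ (Function.minimalPeriod (⇑π) z)) z = z := by
  rw [perm_pow_apply]; exact Function.iterate_minimalPeriod

lemma perm_periodic (π : Perm X) (z : X) : z ∈ Function.periodicPts (⇑π) := by
  refine ⟨orderOf π, orderOf_pos π, ?_⟩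
  show (⇑π)^[orderOf π] z = z
  rw [← perm_pow_apply, pow_orderOf_eq_one]; rfl

lemma perm_minPeriod_pos (π : Perm X) (z : X) :
    0 < Function.minimalPeriod (⇑π) z :=
  Function.minimalPeriod_pos_of_mem_periodicPts (perm_periodic π z)

lemma perm_pow_ne_of_lt_minPeriod (π : Perm X) (z : X) {k : ℕ} (hk : 0 < k)
    (hk2 : k < Function.minimalPeriod (⇑π) z) : (π ^ k) z ≠ z := by
  intro hc
  have : Function.IsPeriodicPt (⇑π) k z := by
    show (⇑π)^[k] z = z
    rw [← perm_pow_apply]; exact hc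
  exact absurd (this.minimalPeriod_le hk) (not_le.2 hk2)

lemma sameCycle_of_nat_pow {π : Perm X} {z w : X} {n : ℕ} (h : (π ^ n) z = w) :
    π.SameCycle z w := ⟨(n : ℤ), by rw [zpow_natCast]; exact h⟩

/-- D2 : if `a, b` lie in different cycles of `π`, they lie in the same cycle of `π * swap a b`. -/
lemma sameCycle_mul_swap_of_not_sameCycle {π : Perm X} {a b : X}
    (h : ¬ π.SameCycle a b) : (π * swap a b).SameCycle a b := by
  set r := Function.minimalPeriod (⇑π) a with hr
  have hrpos : 0 < r := perm_minPeriod_pos π a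
  have claim : ∀ k, 1 ≤ k → k ≤ r → ((π * swap a b) ^ k) b = (π ^ k) a := by
    intro k hk1
    induction k with
    | zero => omega
    | succ k ihk =>
      intro hkr
      rcases Nat.eq_or_lt_of_le hk1 with he | hlt
      · have : k = 0 := by omega
        subst this
        simp [Perm.mul_apply, swap_apply_right]
      · have hk : 1 ≤ k := by omega
        have ihk' := ihk hk (by omega)
        have hne1 : (π ^ k) a ≠ a := perm_pow_ne_of_lt_minPeriod π a hk (by omega)
        have hne2 : (π ^ k) a ≠ b := fun hc => h (sameCycle_of_nat_pow hc)
        simp only [pow_succ', Perm.mul_apply, ihk', swap_apply_of_ne_of_ne hne1 hne2]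
  have := claim r (by omega) le_rfl
  rw [perm_pow_minPeriod π a] at this
  exact (sameCycle_of_nat_pow this).symm

/-- D1 : if `a, b` lie in the same cycle of `π`, they lie in different cycles of `π * swap a b`. -/
lemma not_sameCycle_mul_swap_of_sameCycle {π : Perm X} {a b : X} (hab : a ≠ b)
    (h : π.SameCycle a b) : ¬ (π * swap a b).SameCycle a b := by
  set r := Function.minimalPeriod (⇑π) a with hr
  have hrpos : 0 < r := perm_minPeriod_pos π a
  obtain ⟨i, hi0, _, hib⟩ := h.exists_pow_eq π
  set s := i % r with hs
  have hsr : s < r := Nat.mod_lt _ hrpos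
  have hsb : (π ^ s) a = b := by
    rw [perm_pow_apply] at hib ⊢
    rw [hs, hr, Function.iterate_mod_minimalPeriod_eq]
    exact hib
  have hs1 : 1 ≤ s := by
    rcases Nat.eq_zero_or_pos s with h0 | h1
    · exfalso; apply hab; rw [h0] at hsb; simpa using hsb
    · exact h1
  set U : Set X := {w | ∃ k, 1 ≤ k ∧ k ≤ s ∧ (π ^ k) a = w} with hU
  have hbU : b ∈ U := ⟨s, hs1, le_rfl, hsb⟩
  have haU : a ∉ U := by
    rintro ⟨k, hk1, hk2, hk3⟩
    exact perm_pow_ne_of_lt_minPeriod π a hk1 (by omega) hk3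
  have hUinv : ∀ w ∈ U, (π * swap a b) w ∈ U := by
    rintro w ⟨k, hk1, hk2, rfl⟩
    by_cases hwb : (π ^ k) a = b
    · rw [hwb, Perm.mul_apply, swap_apply_right]
      exact ⟨1, le_rfl, hs1, by rw [pow_one]⟩
    · have hwa : (π ^ k) a ≠ a := fun hc => haU ⟨k, hk1, hk2, hc⟩
      have hks : k < s := by
        rcases Nat.eq_or_lt_of_le hk2 with he | hlt
        · exact absurd (he ▸ hsb) hwb
        · exact hlt
      rw [Perm.mul_apply, swap_apply_of_ne_of_ne hwa hwb]
      exact ⟨k + 1, by omega, by omega, by rw [pow_succ', Perm.mul_apply]⟩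
  intro hc
  obtain ⟨i', _, _, hi'⟩ := hc.symm.exists_pow_eq (π * swap a b)
  have : ∀ n : ℕ, ((π * swap a b) ^ n) b ∈ U := by
    intro n
    induction n with
    | zero => simpa using hbU
    | succ n ihn => rw [pow_succ', Perm.mul_apply]; exact hUinv _ ihn
  have h2 := this i'
  rw [hi'] at h2
  exact haU h2
end Swap

section Count
variable {X : Type} [Fintype X] [DecidableEq X]

lemma orbRel_congr {S S' : Set (Perm X)} (h : Subgroup.closure S = Subgroup.closure S')
    (z w : X) : orbRel S z w ↔ orbRel S' z w := by
  unfold orbRel; rw [h]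

lemma card_orb_congr {S S' : Set (Perm X)} (h : Subgroup.closure S = Subgroup.closure S') :
    Nat.card (Quotient (orbSetoid S)) = Nat.card (Quotient (orbSetoid S')) :=
  Nat.card_congr (Quotient.congrRight (orbRel_congr h))

lemma card_orb_mono {S S' : Set (Perm X)} (h : S ⊆ S') :
    Nat.card (Quotient (orbSetoid S')) ≤ Nat.card (Quotient (orbSetoid S)) := by
  refine Nat.card_le_card_of_surjective (Quotient.map id (fun z w hh => orbRel_mono h hh)) ?_
  intro y
  obtain ⟨z, rfl⟩ := Quotient.exists_rep y
  exact ⟨Quotient.mk _ z, rfl⟩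

lemma card_orb_insert_swap_le (S : Set (Perm X)) (a b : X) :
    Nat.card (Quotient (orbSetoid S)) ≤
      Nat.card (Quotient (orbSetoid (insert (swap a b) S))) + 1 := by
  by_cases h : orbRel S a b
  · rw [card_orb_insert_swap_of_rel h]; omega
  · rw [card_orb_insert_swap_of_not_rel h]


lemma closure_insert_mul_right (x t : Perm X) (ht : t * t = 1) :
    Subgroup.closure (insert t ({x} : Set (Perm X))) =
      Subgroup.closure (insert t ({x * t} : Set (Perm X))) := by
  apply le_antisymm
  · refine (Subgroup.closure_le _).2 ?_
    intro g hg
    rcases hg with rfl | hg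
    · exact Subgroup.subset_closure (Set.mem_insert _ _)
    · have hg' : g = x := hg
      subst hg'
      have h1 : g * t ∈ Subgroup.closure (insert t ({g * t} : Set (Perm X))) :=
        Subgroup.subset_closure (Set.mem_insert_of_mem _ rfl)
      have h2 : t ∈ Subgroup.closure (insert t ({g * t} : Set (Perm X))) :=
        Subgroup.subset_closure (Set.mem_insert _ _)
      have h3 := Subgroup.mul_mem _ h1 h2
      rwa [mul_assoc, ht, mul_one] at h3
  · refine (Subgroup.closure_le _).2 ?_
    intro g hg
    rcases hg with rfl | hg
    · exact Subgroup.subset_closure (Set.mem_insert _ _)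
    · have hg' : g = x * t := hg
      subst hg'
      exact Subgroup.mul_mem _
        (Subgroup.subset_closure (Set.mem_insert_of_mem _ rfl))
        (Subgroup.subset_closure (Set.mem_insert _ _))

/-- L1 -/
lemma cycleCount_mul_swap_of_sameCycle {π : Perm X} {a b : X} (hab : a ≠ b)
    (h : π.SameCycle a b) :
    (π * swap a b).cycleCount = π.cycleCount + 1 := by
  have hcl : Subgroup.closure (insert (swap a b) {π}) =
      Subgroup.closure (insert (swap a b) {π * swap a b}) := closure_insert_mul_right π (swap a b) (swap_mul_self a b)
  have e1 : π.cycleCount = Nat.card (Quotient (orbSetoid (insert (swap a b) ({π} : Set (Perm X))))) := by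
    rw [cycleCount_eq_orb, ← card_orb_insert_swap_of_rel ((sameCycle_iff_orb π a b).1 h)]
  have e2 : (π * swap a b).cycleCount =
      Nat.card (Quotient (orbSetoid (insert (swap a b) ({π * swap a b} : Set (Perm X))))) + 1 := by
    rw [cycleCount_eq_orb]
    exact card_orb_insert_swap_of_not_rel
      (fun hc => not_sameCycle_mul_swap_of_sameCycle hab h ((sameCycle_iff_orb _ a b).2 hc))
  rw [e1, e2, card_orb_congr hcl]

/-- L2 -/
lemma cycleCount_mul_swap_of_not_sameCycle {π : Perm X} {a b : X}
    (h : ¬ π.SameCycle a b) :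
    (π * swap a b).cycleCount + 1 = π.cycleCount := by
  have hcl : Subgroup.closure (insert (swap a b) {π}) =
      Subgroup.closure (insert (swap a b) {π * swap a b}) := closure_insert_mul_right π (swap a b) (swap_mul_self a b)
  have e1 : π.cycleCount =
      Nat.card (Quotient (orbSetoid (insert (swap a b) ({π} : Set (Perm X))))) + 1 := by
    rw [cycleCount_eq_orb]
    exact card_orb_insert_swap_of_not_rel (fun hc => h ((sameCycle_iff_orb π a b).2 hc))
  have e2 : (π * swap a b).cycleCount =
      Nat.card (Quotient (orbSetoid (insert (swap a b) ({π * swap a b} : Set (Perm X))))) := by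
    rw [cycleCount_eq_orb]
    exact (card_orb_insert_swap_of_rel
      ((sameCycle_iff_orb _ a b).1 (sameCycle_mul_swap_of_not_sameCycle h))).symm
  rw [e1, e2, card_orb_congr hcl]
end Count

section Genus
variable {X : Type} [Fintype X] [DecidableEq X]

lemma cycleCount_le_card (π : Perm X) : π.cycleCount ≤ Fintype.card X := by
  rw [← Nat.card_eq_fintype_card]
  exact Nat.card_le_card_of_surjective (Quotient.mk π.cycleSetoid)
    (fun q => Quotient.exists_rep q)

lemma cycleCount_one : (1 : Perm X).cycleCount = Fintype.card X := by
  have hb : Function.Bijective (Quotient.mk (1 : Perm X).cycleSetoid) := by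
    constructor
    · intro z w h
      obtain ⟨i, hi⟩ := Quotient.exact h
      simpa using hi
    · exact fun q => Quotient.exists_rep q
  rw [Equiv.Perm.cycleCount, ← Nat.card_eq_of_bijective _ hb, Nat.card_eq_fintype_card]

lemma eq_one_of_cycleCount_eq_card {π : Perm X} (h : π.cycleCount = Fintype.card X) :
    π = 1 := by
  have : Fintype (Quotient π.cycleSetoid) := Fintype.ofFinite _
  have hsurj : Function.Surjective (Quotient.mk π.cycleSetoid) := fun q => Quotient.exists_rep q
  have hcard : Fintype.card X = Fintype.card (Quotient π.cycleSetoid) := by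
    rw [← Nat.card_eq_fintype_card, ← Nat.card_eq_fintype_card, ← Equiv.Perm.cycleCount, h,
      Nat.card_eq_fintype_card]
  have hbij : Function.Bijective (Quotient.mk π.cycleSetoid) :=
    (Fintype.bijective_iff_surjective_and_card _).2 ⟨hsurj, hcard⟩
  ext z
  have : Quotient.mk π.cycleSetoid z = Quotient.mk π.cycleSetoid (π z) :=
    Quotient.sound ⟨1, by rw [zpow_one]⟩
  exact (hbij.1 this).symm

lemma closure_pair_one (x : Perm X) :
    Subgroup.closure ({x, 1} : Set (Perm X)) = Subgroup.closure ({x} : Set (Perm X)) := by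
  apply le_antisymm
  · refine (Subgroup.closure_le _).2 ?_
    rintro g (rfl | hg)
    · exact Subgroup.subset_closure rfl
    · have : g = 1 := hg
      rw [this]; exact Subgroup.one_mem _
  · refine (Subgroup.closure_le _).2 ?_
    rintro g rfl
    exact Subgroup.subset_closure (Set.mem_insert _ _)

lemma closure_insert2_mul (x y t : Perm X) (ht : t * t = 1) :
    Subgroup.closure (insert t ({x, y * t} : Set (Perm X))) =
      Subgroup.closure (insert t ({x, y} : Set (Perm X))) := by
  apply le_antisymm
  · refine (Subgroup.closure_le _).2 ?_
    rintro g (rfl | rfl | hg)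
    · exact Subgroup.subset_closure (Set.mem_insert _ _)
    · exact Subgroup.subset_closure (Set.mem_insert_of_mem _ (Set.mem_insert _ _))
    · have hg' : g = y * t := hg
      subst hg'
      exact Subgroup.mul_mem _
        (Subgroup.subset_closure (Set.mem_insert_of_mem _ (Set.mem_insert_of_mem _ rfl)))
        (Subgroup.subset_closure (Set.mem_insert _ _))
  · refine (Subgroup.closure_le _).2 ?_
    rintro g (rfl | rfl | hg)
    · exact Subgroup.subset_closure (Set.mem_insert _ _)
    · exact Subgroup.subset_closure (Set.mem_insert_of_mem _ (Set.mem_insert _ _))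
    · have hg' : g = y := hg
      subst hg'
      have h3 := Subgroup.mul_mem _
        (Subgroup.subset_closure
          (Set.mem_insert_of_mem _ (Set.mem_insert_of_mem _ rfl) :
            g * t ∈ insert t ({x, g * t} : Set (Perm X))))
        (Subgroup.subset_closure (Set.mem_insert t ({x, g * t} : Set (Perm X))))
      rwa [mul_assoc, ht, mul_one] at h3

lemma genus_base (x : Perm X) :
    x.cycleCount + (1 : Perm X).cycleCount + (x * 1).cycleCount ≤
      Fintype.card X + 2 * Nat.card (Quotient (orbSetoid ({x, 1} : Set (Perm X)))) := by
  rw [mul_one, cycleCount_one, card_orb_congr (closure_pair_one x), ← cycleCount_eq_orb]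
  omega

/-- The Euler/genus inequality for a pair of permutations. -/
lemma genus_ineq (x : Perm X) (y : Perm X) :
    x.cycleCount + y.cycleCount + (x * y).cycleCount ≤
      Fintype.card X + 2 * Nat.card (Quotient (orbSetoid ({x, y} : Set (Perm X)))) := by
  suffices H : ∀ (m : ℕ) (y : Perm X), Fintype.card X - y.cycleCount ≤ m →
      x.cycleCount + y.cycleCount + (x * y).cycleCount ≤
      Fintype.card X + 2 * Nat.card (Quotient (orbSetoid ({x, y} : Set (Perm X)))) by
    exact H _ y le_rfl
  intro m
  induction m with
  | zero =>
    intro y hy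
    have h1 : y.cycleCount = Fintype.card X :=
      le_antisymm (cycleCount_le_card y) (by omega)
    have h2 : y = 1 := eq_one_of_cycleCount_eq_card h1
    subst h2
    exact genus_base x
  | succ m ih =>
    intro y hy
    by_cases hy1 : y = 1
    · subst hy1; exact genus_base x
    · obtain ⟨a, ha⟩ : ∃ a, y a ≠ a := by
        by_contra hc
        push_neg at hc
        exact hy1 (Equiv.ext hc)
      set b := y a with hb
      have hab : a ≠ b := fun hc => ha hc.symm
      have hyab : y.SameCycle a b := ⟨1, by rw [zpow_one]⟩
      set t := swap a b with hT
      set y' := y * t with hy'def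
      have hcy' : y'.cycleCount = y.cycleCount + 1 :=
        cycleCount_mul_swap_of_sameCycle hab hyab
      have hmeas : Fintype.card X - y'.cycleCount ≤ m := by
        have := cycleCount_le_card y'
        omega
      have IH := ih y' hmeas
      have hassoc : x * y' = (x * y) * t := by rw [hy'def, mul_assoc]
      have hclo := closure_insert2_mul x y t (swap_mul_self a b)
      by_cases hsc : (x * y).SameCycle a b
      · have hLV : (x * y * t).cycleCount = (x * y).cycleCount + 1 :=
          cycleCount_mul_swap_of_sameCycle hab hsc
        have hK : Nat.card (Quotient (orbSetoid ({x, y'} : Set (Perm X)))) ≤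
            Nat.card (Quotient (orbSetoid ({x, y} : Set (Perm X)))) + 1 := by
          calc Nat.card (Quotient (orbSetoid ({x, y'} : Set (Perm X))))
              ≤ Nat.card (Quotient (orbSetoid (insert t ({x, y'} : Set (Perm X))))) + 1 :=
                card_orb_insert_swap_le _ a b
            _ = Nat.card (Quotient (orbSetoid (insert t ({x, y} : Set (Perm X))))) + 1 := by
                rw [card_orb_congr hclo]
            _ ≤ Nat.card (Quotient (orbSetoid ({x, y} : Set (Perm X)))) + 1 := by
                have := card_orb_mono (Set.subset_insert t ({x, y} : Set (Perm X)))
                omega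
        rw [hassoc, hLV] at IH
        omega
      · have hLV : (x * y * t).cycleCount + 1 = (x * y).cycleCount :=
          cycleCount_mul_swap_of_not_sameCycle hsc
        have hrel : orbRel ({x, y'} : Set (Perm X)) a b := by
          have hsc' : (x * y').SameCycle a b := by
            rw [hassoc]; exact sameCycle_mul_swap_of_not_sameCycle hsc
          obtain ⟨i, hi⟩ := hsc'
          refine ⟨(x * y') ^ i, ?_, hi⟩
          refine zpow_mem ?_ i
          exact Subgroup.mul_mem _
            (Subgroup.subset_closure (Set.mem_insert _ _))
            (Subgroup.subset_closure (Set.mem_insert_of_mem _ rfl))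
        have hK : Nat.card (Quotient (orbSetoid ({x, y'} : Set (Perm X)))) ≤
            Nat.card (Quotient (orbSetoid ({x, y} : Set (Perm X)))) := by
          calc Nat.card (Quotient (orbSetoid ({x, y'} : Set (Perm X))))
              = Nat.card (Quotient (orbSetoid (insert t ({x, y'} : Set (Perm X))))) :=
                (card_orb_insert_swap_of_rel hrel).symm
            _ = Nat.card (Quotient (orbSetoid (insert t ({x, y} : Set (Perm X))))) := by
                rw [card_orb_congr hclo]
            _ ≤ Nat.card (Quotient (orbSetoid ({x, y} : Set (Perm X)))) :=
                card_orb_mono (Set.subset_insert t ({x, y} : Set (Perm X)))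
        rw [hassoc] at IH
        omega
end Genus

section Cover
variable {X G : Type} [Fintype X] [Fintype G]

lemma cover_fst {τ : Perm X} {T : Perm (X × G)} (hp : ∀ p, (T p).1 = τ p.1) :
    ∀ (n : ℕ) (p : X × G), ((T ^ n) p).1 = (τ ^ n) p.1 := by
  intro n
  induction n with
  | zero => intro p; simp
  | succ n ihn =>
    intro p
    rw [pow_succ', pow_succ', Perm.mul_apply, Perm.mul_apply, hp, ihn]

lemma cover_cycleCount (τ : Perm X) (T : Perm (X × G))
    (hp : ∀ p, (T p).1 = τ p.1)
    (hf : ∀ (x : X) (n : ℕ), (τ ^ n) x = x → ∀ g : G, (T ^ n) (x, g) = (x, g)) :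
    T.cycleCount = τ.cycleCount * Nat.card G := by
  classical
  have hdesc : ∀ p q : X × G, T.SameCycle p q → τ.SameCycle p.1 q.1 := by
    intro p q h
    obtain ⟨n, _, _, hn⟩ := h.exists_pow_eq T
    exact sameCycle_of_nat_pow (by rw [← cover_fst hp n p, hn])
  let pr : Quotient T.cycleSetoid → Quotient τ.cycleSetoid :=
    Quotient.lift (fun p : X × G => Quotient.mk τ.cycleSetoid p.1)
      (fun p q h => Quotient.sound (hdesc p q h))
  have hpr : ∀ p : X × G, pr (Quotient.mk T.cycleSetoid p) = Quotient.mk τ.cycleSetoid p.1 :=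
    fun p => rfl
  have key : ∀ q : Quotient τ.cycleSetoid,
      Function.Bijective (fun g : G =>
        (⟨Quotient.mk T.cycleSetoid (q.out, g), by rw [hpr]; simp [Quotient.out_eq]⟩ :
          {o : Quotient T.cycleSetoid // pr o = q})) := by
    intro q
    constructor
    · intro g g' hgg
      have h1 : Quotient.mk T.cycleSetoid (q.out, g) = Quotient.mk T.cycleSetoid (q.out, g') :=
        congrArg Subtype.val hgg
      obtain ⟨n, _, _, hn⟩ :=
        (Quotient.exact h1 : T.SameCycle (q.out, g) (q.out, g')).exists_pow_eq T
      have hfst : (τ ^ n) q.out = q.out := by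
        have := cover_fst hp n (q.out, g)
        rw [hn] at this
        exact this.symm
      have := hf q.out n hfst g
      rw [hn] at this
      exact (Prod.ext_iff.mp this).2.symm
    · rintro ⟨o, ho⟩
      obtain ⟨p, rfl⟩ := Quotient.exists_rep o
      rw [hpr] at ho
      have hsc : τ.SameCycle p.1 q.out := by
        have : Quotient.mk τ.cycleSetoid p.1 = Quotient.mk τ.cycleSetoid q.out := by
          rw [ho, Quotient.out_eq]
        exact Quotient.exact this
      obtain ⟨n, _, _, hn⟩ := hsc.exists_pow_eq τ
      refine ⟨((T ^ n) p).2, ?_⟩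
      apply Subtype.ext
      show Quotient.mk T.cycleSetoid (q.out, ((T ^ n) p).2) = Quotient.mk T.cycleSetoid p
      have hTp : (T ^ n) p = (q.out, ((T ^ n) p).2) := by
        refine Prod.ext ?_ rfl
        rw [cover_fst hp n p, hn]
      rw [← hTp]
      exact (Quotient.sound (sameCycle_of_nat_pow (rfl : (T ^ n) p = (T ^ n) p))).symm
  have e1 : Quotient T.cycleSetoid ≃ (Σ q : Quotient τ.cycleSetoid, {o // pr o = q}) :=
    (Equiv.sigmaFiberEquiv pr).symm
  have e2 : (Σ q : Quotient τ.cycleSetoid, {o // pr o = q}) ≃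
      (Σ _ : Quotient τ.cycleSetoid, G) :=
    Equiv.sigmaCongrRight (fun q => (Equiv.ofBijective _ (key q)).symm)
  have e3 : (Σ _ : Quotient τ.cycleSetoid, G) ≃ Quotient τ.cycleSetoid × G :=
    Equiv.sigmaEquivProd _ _
  rw [Equiv.Perm.cycleCount, Nat.card_congr ((e1.trans e2).trans e3), Nat.card_prod]
  rfl
end Cover

section Invol
variable {X : Type} [Fintype X]

lemma invol_zpow {β : Perm X} (h2 : β * β = 1) (i : ℤ) : β ^ i = 1 ∨ β ^ i = β := by
  have hn : β ^ (2 : ℕ) = 1 := by rw [pow_two]; exact h2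
  rcases Int.even_or_odd i with ⟨k, hk⟩ | ⟨k, hk⟩
  · left
    subst hk
    rw [← two_mul, zpow_mul, show (2 : ℤ) = ((2 : ℕ) : ℤ) from rfl, zpow_natCast, hn, one_zpow]
  · right
    subst hk
    rw [zpow_add, zpow_mul, show (2 : ℤ) = ((2 : ℕ) : ℤ) from rfl, zpow_natCast, hn, one_zpow,
      one_mul, zpow_one]

lemma invol_sameCycle {β : Perm X} (h2 : β * β = 1) {d w : X} (h : β.SameCycle d w) :
    w = d ∨ w = β d := by
  obtain ⟨i, hi⟩ := h
  rcases invol_zpow h2 i with he | he <;> rw [he] at hi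
  · left; exact hi.symm
  · right; exact hi.symm

lemma card_eq_two_mul_cycleCount_invol (β : Perm X) (h2 : β * β = 1)
    (hfpf : ∀ d, β d ≠ d) : Fintype.card X = 2 * β.cycleCount := by
  classical
  have hb : Function.Bijective (fun qb : Quotient β.cycleSetoid × Bool =>
      cond qb.2 (β qb.1.out) qb.1.out) := by
    have hout : ∀ r : Quotient β.cycleSetoid,
        Quotient.mk β.cycleSetoid (β r.out) = r := by
      intro r
      have hsc : β.SameCycle r.out (β r.out) := ⟨1, by rw [zpow_one]⟩
      have h1 : Quotient.mk β.cycleSetoid (β r.out) = Quotient.mk β.cycleSetoid r.out :=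
        (Quotient.sound hsc).symm
      rw [h1, Quotient.out_eq]
    constructor
    · rintro ⟨q, i⟩ ⟨q', i'⟩ hqq
      rcases i <;> rcases i' <;> simp only [cond_true, cond_false] at hqq
      · exact Prod.ext (by rw [← Quotient.out_eq q, ← Quotient.out_eq q', hqq]) rfl
      · exfalso
        have hq : q = q' := by rw [← Quotient.out_eq q, hqq, hout]
        subst hq
        exact hfpf q.out hqq.symm
      · exfalso
        have hq : q = q' := by rw [← hout q, hqq, Quotient.out_eq]
        subst hq
        exact hfpf q.out hqq
      · have hq : q = q' := by rw [← hout q, hqq, hout]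
        exact Prod.ext hq rfl
    · intro d
      have h5 : Quotient.mk β.cycleSetoid ((Quotient.mk β.cycleSetoid d).out) =
          Quotient.mk β.cycleSetoid d := Quotient.out_eq _
      have hsc : β.SameCycle (Quotient.mk β.cycleSetoid d).out d := Quotient.exact h5
      rcases invol_sameCycle h2 hsc with he | he
      · exact ⟨(Quotient.mk β.cycleSetoid d, false), by simp only [cond_false]; exact he.symm⟩
      · exact ⟨(Quotient.mk β.cycleSetoid d, true), by simp only [cond_true]; exact he.symm⟩
  rw [← Nat.card_eq_fintype_card, ← Nat.card_eq_of_bijective _ hb, Nat.card_prod,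
    Nat.card_eq_fintype_card (α := Bool), Fintype.card_bool, Nat.mul_comm]
  rfl
end Invol

section Lift
variable {D G : Type} [Fintype D] [Fintype G] [Group G]

def liftS (τ : Perm D) : Perm (D × G) := τ.prodCongr (Equiv.refl G)

lemma liftS_pair (τ : Perm D) (d : D) (g : G) : liftS τ (d, g) = (τ d, g) := rfl

lemma liftS_fst (τ : Perm D) (p : D × G) : (liftS τ p).1 = τ p.1 := by
  obtain ⟨d, g⟩ := p; rfl

lemma liftS_snd (τ : Perm D) (p : D × G) : (liftS τ p).2 = p.2 := by
  obtain ⟨d, g⟩ := p; rfl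

lemma liftS_mul (τ₁ τ₂ : Perm D) : liftS τ₁ * liftS τ₂ = (liftS (τ₁ * τ₂) : Perm (D × G)) := by
  apply Equiv.ext
  rintro ⟨d, g⟩
  rw [Perm.mul_apply, liftS_pair, liftS_pair, liftS_pair, Perm.mul_apply]

lemma liftS_one : (liftS (1 : Perm D) : Perm (D × G)) = 1 := by
  apply Equiv.ext
  rintro ⟨d, g⟩
  rw [liftS_pair]
  rfl

lemma liftS_inv (τ : Perm D) : (liftS τ : Perm (D × G))⁻¹ = liftS τ⁻¹ := by
  apply inv_eq_of_mul_eq_one_right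
  rw [liftS_mul, mul_inv_cancel, liftS_one]

lemma liftS_pow (τ : Perm D) : ∀ (n : ℕ) (p : D × G), ((liftS τ) ^ n) p = ((τ ^ n) p.1, p.2) := by
  intro n
  induction n with
  | zero => intro p; simp
  | succ n ihn =>
    intro p
    rw [pow_succ', pow_succ', Perm.mul_apply, ihn, liftS_pair, Perm.mul_apply]

def liftA (α : Perm D) (κ : D → G) (hinv : ∀ d, α (α d) = d)
    (hlab : ∀ d, κ (α d) = (κ d)⁻¹) : Perm (D × G) :=
  Function.Involutive.toPerm (fun p => (α p.1, (κ p.1)⁻¹ * p.2)) (by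
    intro p
    simp only
    refine Prod.ext (hinv p.1) ?_
    simp only
    rw [hlab, inv_inv, mul_inv_cancel_left])

lemma liftA_apply (α : Perm D) (κ : D → G) (hinv : ∀ d, α (α d) = d)
    (hlab : ∀ d, κ (α d) = (κ d)⁻¹) (p : D × G) :
    liftA α κ hinv hlab p = (α p.1, (κ p.1)⁻¹ * p.2) := rfl

lemma liftA_sq (α : Perm D) (κ : D → G) (hinv : ∀ d, α (α d) = d)
    (hlab : ∀ d, κ (α d) = (κ d)⁻¹) :
    liftA α κ hinv hlab * liftA α κ hinv hlab = 1 := by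
  apply Equiv.ext
  intro p
  rw [Perm.mul_apply, liftA_apply, liftA_apply]
  simp only
  refine Prod.ext (hinv p.1) ?_
  simp only
  rw [hlab, inv_inv, mul_inv_cancel_left]
  rfl

lemma telescope_prod {H : Type} [Group H] (f : ℕ → H) (n : ℕ) :
    ((List.range n).map fun i => f i * (f (i + 1))⁻¹).prod = f 0 * (f n)⁻¹ := by
  induction n with
  | zero => simp
  | succ n ihn =>
    rw [List.range_succ, List.map_append, List.prod_append, ihn]
    simp [mul_assoc]
end Lift

/-- Coloring-flow duality for planar maps: if `M = (D, σ, α)` is connected with Euler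
characteristic `2`, then proper `G`-colorings of the dual map `M* = (D, σ∘α, α)` map onto
the nowhere-identity `G`-flows on `M` via `c ↦ κ_c`, `κ_c(d) = c(tail* d)·c(head* d)⁻¹`,
with all fibers of size `|G|`. -/
theorem planar_coloring_flow_duality
    {D : Type} [Fintype D] [Nonempty D] (σ α : Equiv.Perm D)
    (hinv : ∀ d, α (α d) = d) (hfpf : ∀ d, α d ≠ d)
    (hconn : MapConnected σ α)
    (hplanar : (σ.cycleCount : ℤ) - (α.cycleCount : ℤ) + ((σ * α).cycleCount : ℤ) = 2)
    {G : Type} [Group G] [Fintype G]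
    (κof : {c : Quotient (σ * α).cycleSetoid → G //
        ∀ d, c (Quotient.mk (σ * α).cycleSetoid d) ≠
          c (Quotient.mk (σ * α).cycleSetoid (α d))} → D → G)
    (hκof : ∀ c d, κof c d =
      c.1 (Quotient.mk (σ * α).cycleSetoid d) *
        (c.1 (Quotient.mk (σ * α).cycleSetoid (α d)))⁻¹) :
    (∀ c, IsGFlow σ α (κof c) ∧ ∀ d, κof c d ≠ 1) ∧
    (∀ κ : D → G, IsGFlow σ α κ → (∀ d, κ d ≠ 1) →
      (∃ c, κof c = κ) ∧ Nat.card {c // κof c = κ} = Nat.card G) := by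
  classical
  have hface : ∀ d : D, Quotient.mk (σ * α).cycleSetoid (α d) =
      Quotient.mk (σ * α).cycleSetoid (σ d) := by
    intro d
    refine Quotient.sound ?_
    exact ⟨1, by rw [zpow_one, Perm.mul_apply, hinv]⟩
  constructor
  · -- every κof c is a nowhere-identity flow
    intro c
    refine ⟨⟨?_, ?_⟩, ?_⟩
    · -- labelling
      intro d
      rw [hκof, hκof, hinv d, mul_inv_rev, inv_inv]
    · -- flow condition
      intro d
      show ((List.range (Function.minimalPeriod (⇑σ) d)).map fun i => κof c ((σ ^ i) d)).prod = 1
      have hcong : (fun i : ℕ => κof c ((σ ^ i) d)) = fun i : ℕ =>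
          (fun j : ℕ => c.1 (Quotient.mk (σ * α).cycleSetoid ((σ ^ j) d))) i *
          ((fun j : ℕ => c.1 (Quotient.mk (σ * α).cycleSetoid ((σ ^ j) d))) (i + 1))⁻¹ := by
        funext i
        rw [hκof]
        have h1 : Quotient.mk (σ * α).cycleSetoid (α ((σ ^ i) d)) =
            Quotient.mk (σ * α).cycleSetoid ((σ ^ (i + 1)) d) := by
          rw [hface ((σ ^ i) d)]
          congr 1
          rw [pow_succ', Perm.mul_apply]
        rw [h1]
      rw [hcong, telescope_prod]
      rw [perm_pow_minPeriod σ d]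
      simp
    · -- nowhere identity
      intro d hone
      rw [hκof] at hone
      exact c.2 d (mul_inv_eq_one.mp hone)
  · -- surjectivity with fibers of size |G|
    intro κ hκ hni
    obtain ⟨hlab, hflow⟩ := hκ
    set A : Perm (D × G) := liftA α κ hinv hlab with hA
    set S : Perm (D × G) := liftS (σ * α) with hS
    have hαα : α * α = 1 := Equiv.ext fun d => by rw [Perm.mul_apply, hinv]; rfl
    have hA2 : A * A = 1 := liftA_sq α κ hinv hlab
    have hAinv : A⁻¹ = A := by
      apply inv_eq_of_mul_eq_one_right
      exact hA2
    have hAapply : ∀ p : D × G, A p = (α p.1, (κ p.1)⁻¹ * p.2) := fun p => rfl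
    have hAfst : ∀ p : D × G, (A p).1 = α p.1 := fun p => rfl
    set cl := Subgroup.closure ({S, A} : Set (Perm (D × G))) with hcl
    -- closure {σ, α} = closure {σ*α, α}
    have hcleq : Subgroup.closure ({σ, α} : Set (Perm D)) =
        Subgroup.closure ({σ * α, α} : Set (Perm D)) := by
      apply le_antisymm
      · refine (Subgroup.closure_le _).2 ?_
        rintro g (rfl | hg)
        · have h1 := Subgroup.mul_mem (Subgroup.closure ({g * α, α} : Set (Perm D)))
            (Subgroup.subset_closure (Set.mem_insert _ _))
            (Subgroup.subset_closure (Set.mem_insert_of_mem _ rfl))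
          rwa [mul_assoc, hαα, mul_one] at h1
        · have hg' : g = α := hg
          subst hg'
          exact Subgroup.subset_closure (Set.mem_insert_of_mem _ rfl)
      · refine (Subgroup.closure_le _).2 ?_
        rintro g (rfl | hg)
        · exact Subgroup.mul_mem _
            (Subgroup.subset_closure (Set.mem_insert _ _))
            (Subgroup.subset_closure (Set.mem_insert_of_mem _ rfl))
        · have hg' : g = α := hg
          subst hg'
          exact Subgroup.subset_closure (Set.mem_insert_of_mem _ rfl)
    -- lifting connectivity
    have hlift : ∀ w ∈ Subgroup.closure ({σ * α, α} : Set (Perm D)), ∀ p : D × G,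
        (∃ h ∈ cl, (h p).1 = w p.1) ∧ (∃ h ∈ cl, (h p).1 = w⁻¹ p.1) := by
      intro w hw
      induction hw using Subgroup.closure_induction with
      | mem x hx =>
        rcases hx with rfl | hx
        · intro p
          constructor
          · exact ⟨S, Subgroup.subset_closure (Set.mem_insert _ _), liftS_fst _ p⟩
          · refine ⟨S⁻¹, Subgroup.inv_mem _ (Subgroup.subset_closure (Set.mem_insert _ _)), ?_⟩
            rw [hS, liftS_inv, liftS_fst]
        · have hx' : x = α := hx
          subst hx'
          intro p
          constructor
          · exact ⟨A, Subgroup.subset_closure (Set.mem_insert_of_mem _ rfl), hAfst p⟩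
          · refine ⟨A, Subgroup.subset_closure (Set.mem_insert_of_mem _ rfl), ?_⟩
            have : x⁻¹ = x := by
              apply inv_eq_of_mul_eq_one_right
              exact hαα
            rw [this]
            exact hAfst p
      | one =>
        intro p
        exact ⟨⟨1, Subgroup.one_mem _, by simp⟩, ⟨1, Subgroup.one_mem _, by simp⟩⟩
      | mul x y hx hy ihx ihy =>
        intro p
        constructor
        · obtain ⟨h₂, h₂m, h₂e⟩ := (ihy p).1
          obtain ⟨h₁, h₁m, h₁e⟩ := (ihx (h₂ p)).1
          exact ⟨h₁ * h₂, Subgroup.mul_mem _ h₁m h₂m,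
            by rw [Perm.mul_apply, h₁e, h₂e, Perm.mul_apply]⟩
        · obtain ⟨h₁, h₁m, h₁e⟩ := (ihx p).2
          obtain ⟨h₂, h₂m, h₂e⟩ := (ihy (h₁ p)).2
          refine ⟨h₂ * h₁, Subgroup.mul_mem _ h₂m h₁m, ?_⟩
          rw [Perm.mul_apply, h₂e, h₁e, mul_inv_rev, Perm.mul_apply]
      | inv x hx ihx =>
        intro p
        exact ⟨(ihx p).2, by rw [inv_inv]; exact (ihx p).1⟩
    have hreach : ∀ (p : D × G) (d' : D), ∃ h ∈ cl, (h p).1 = d' := by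
      intro p d'
      obtain ⟨w, hw, hwp⟩ := hconn p.1 d'
      rw [hcleq] at hw
      obtain ⟨h, hm, he⟩ := (hlift w hw p).1
      exact ⟨h, hm, by rw [he, hwp]⟩
    obtain ⟨d₀⟩ := (inferInstance : Nonempty D)
    set OS := orbSetoid ({S, A} : Set (Perm (D × G))) with hOS
    set ψ : G → Quotient OS := fun g => Quotient.mk OS (d₀, g) with hψ
    have hψsurj : Function.Surjective ψ := by
      intro o
      obtain ⟨p, rfl⟩ := Quotient.exists_rep o
      obtain ⟨h, hm, he⟩ := hreach p d₀
      refine ⟨(h p).2, Quotient.sound ?_⟩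
      have hp' : h p = (d₀, (h p).2) := Prod.ext he rfl
      exact ⟨h⁻¹, Subgroup.inv_mem _ hm, by rw [← hp', perm_inv_apply_self']⟩
    -- cycle counts of the lifted permutations
    have hcS : S.cycleCount = (σ * α).cycleCount * Nat.card G := by
      refine cover_cycleCount (σ * α) S (liftS_fst _) ?_
      intro x n hxn g
      rw [hS, liftS_pow]
      simp only
      rw [hxn]
    have hcA : A.cycleCount = α.cycleCount * Nat.card G := by
      refine cover_cycleCount α A hAfst ?_
      intro x n hxn g
      rcases Nat.even_or_odd n with ⟨k, hk⟩ | ⟨k, hk⟩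
      · have h1 : A ^ n = 1 := by
          rw [hk, ← two_mul, pow_mul, pow_two, hA2, one_pow]
        rw [h1]; rfl
      · exfalso
        have h1 : α ^ n = α := by
          rw [hk, pow_add, pow_mul, pow_two, hαα, one_pow, one_mul, pow_one]
        rw [h1] at hxn
        exact hfpf x hxn
    have hSAapply : ∀ p : D × G, (S * A) p = (σ p.1, (κ p.1)⁻¹ * p.2) := by
      intro p
      rw [Perm.mul_apply, hAapply, hS, liftS_pair, Perm.mul_apply, hinv]
    have hSAfst : ∀ p : D × G, ((S * A) p).1 = σ p.1 := fun p => by rw [hSAapply]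
    have hSApow : ∀ (n : ℕ) (p : D × G), ((S * A) ^ n) p =
        ((σ ^ n) p.1, (((List.range n).map fun i => κ ((σ ^ i) p.1)).prod)⁻¹ * p.2) := by
      intro n
      induction n with
      | zero => intro p; simp
      | succ n ihn =>
        intro p
        rw [pow_succ', Perm.mul_apply, ihn, hSAapply]
        simp only
        refine Prod.ext ?_ ?_
        · simp only
          rw [pow_succ', Perm.mul_apply]
        · simp only
          rw [List.range_succ, List.map_append, List.prod_append, List.map_singleton,
            List.prod_singleton, mul_inv_rev, mul_assoc]
    have hcSA : (S * A).cycleCount = σ.cycleCount * Nat.card G := by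
      refine cover_cycleCount σ (S * A) hSAfst ?_
      intro x n hxn g
      have hper : Function.IsPeriodicPt (⇑σ) n x := by
        show (⇑σ)^[n] x = x
        rw [← perm_pow_apply]
        exact hxn
      obtain ⟨q, hq⟩ := hper.minimalPeriod_dvd
      have hbase : ∀ g' : G, ((S * A) ^ Function.minimalPeriod (⇑σ) x) (x, g') = (x, g') := by
        intro g'
        rw [hSApow]
        simp only
        have h1 : (σ ^ Function.minimalPeriod (⇑σ) x) x = x := perm_pow_minPeriod σ x
        have h2 : ((List.range (Function.minimalPeriod (⇑σ) x)).map
            fun i => κ ((σ ^ i) x)).prod = 1 := hflow x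
        rw [h1, h2, inv_one, one_mul]
      rw [hq, pow_mul]
      clear hq hxn hper
      induction q with
      | zero => simp
      | succ q ihq =>
        rw [pow_succ, Perm.mul_apply, hbase, ihq]
    -- Euler characteristic arithmetic: Nat.card G ≤ K
    have hgenus := genus_ineq (X := D × G) S A
    rw [← hOS] at hgenus
    have hda : Fintype.card D = 2 * α.cycleCount :=
      card_eq_two_mul_cycleCount_invol α hαα hfpf
    have hplanar' : σ.cycleCount + (σ * α).cycleCount = α.cycleCount + 2 := by omega
    have hGle : Nat.card G ≤ Nat.card (Quotient OS) := by
      rw [hcS, hcA, hcSA] at hgenus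
      have e0 : (σ * α).cycleCount + α.cycleCount + σ.cycleCount = 2 * α.cycleCount + 2 := by
        omega
      have e1 : (σ * α).cycleCount * Nat.card G + α.cycleCount * Nat.card G +
          σ.cycleCount * Nat.card G = Fintype.card (D × G) + 2 * Nat.card G := by
        rw [← add_mul, ← add_mul, e0, Fintype.card_prod, hda, ← Nat.card_eq_fintype_card (α := G)]
        ring
      rw [e1] at hgenus
      omega
    have hKle : Nat.card (Quotient OS) ≤ Nat.card G :=
      Nat.card_le_card_of_surjective ψ hψsurj
    have hψinj : Function.Injective ψ := by
      have hft : Fintype (Quotient OS) := Fintype.ofFinite _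
      have hcard : Fintype.card G = Fintype.card (Quotient OS) := by
        rw [← Nat.card_eq_fintype_card, ← Nat.card_eq_fintype_card]
        omega
      exact ((Fintype.bijective_iff_surjective_and_card ψ).2 ⟨hψsurj, hcard⟩).1
    have hfree0 : ∀ g g' : G, orbRel ({S, A} : Set (Perm (D × G))) (d₀, g) (d₀, g') →
        g = g' := by
      intro g g' hr
      exact hψinj (Quotient.sound hr)
    -- right translations commute with the closure
    have hR : ∀ h ∈ cl, ∀ (p : D × G) (k : G), h (p.1, p.2 * k) = ((h p).1, (h p).2 * k) := by
      intro h hm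
      induction hm using Subgroup.closure_induction with
      | mem x hx =>
        rcases hx with rfl | hx
        · rintro ⟨pd, pg⟩ k
          rfl
        · have hx' : x = A := hx
          subst hx'
          rintro ⟨pd, pg⟩ k
          refine Prod.ext rfl ?_
          simp only [hAapply]
          rw [mul_assoc]
      | one => intro p k; rfl
      | mul x y hx hy ihx ihy =>
        intro p k
        rw [Perm.mul_apply, ihy p k, ihx (y p) k, Perm.mul_apply]
      | inv x hx ihx =>
        intro p k
        have h1 := ihx (x⁻¹ p) k
        rw [perm_apply_inv_self'] at h1
        rw [← h1, perm_inv_apply_self']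
    -- general freeness
    have hfree : ∀ (d : D) (g g' : G),
        orbRel ({S, A} : Set (Perm (D × G))) (d, g) (d, g') → g = g' := by
      rintro d g g' ⟨h, hm, he⟩
      obtain ⟨h₀, h₀m, h₀e⟩ := hreach (d, g) d₀
      have hA1 : h₀ (d, g) = (d₀, (h₀ (d, g)).2) := Prod.ext h₀e rfl
      have hA2' : h₀ (d, g') = (d₀, (h₀ (d, g)).2 * (g⁻¹ * g')) := by
        have h2 := hR h₀ h₀m (d, g) (g⁻¹ * g')
        rw [mul_inv_cancel_left] at h2
        rw [h2, h₀e]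
      have hrel2 : orbRel ({S, A} : Set (Perm (D × G))) (d₀, (h₀ (d, g)).2)
          (d₀, (h₀ (d, g)).2 * (g⁻¹ * g')) := by
        refine ⟨h₀ * h * h₀⁻¹, Subgroup.mul_mem _ (Subgroup.mul_mem _ h₀m hm)
          (Subgroup.inv_mem _ h₀m), ?_⟩
        rw [Perm.mul_apply, Perm.mul_apply, ← hA1, perm_inv_apply_self', he, hA2']
      have h3 := hfree0 _ _ hrel2
      have h4 : g⁻¹ * g' = 1 := by
        have := left_eq_mul.mp h3
        exact this
      exact inv_mul_eq_one.mp h4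
    -- the potential
    have hex : ∀ d : D, ∃ g : G, orbRel ({S, A} : Set (Perm (D × G))) (d₀, 1) (d, g) := by
      intro d
      obtain ⟨h, hm, he⟩ := hreach (d₀, (1 : G)) d
      exact ⟨(h (d₀, 1)).2, ⟨h, hm, Prod.ext he rfl⟩⟩
    set ct : D → G := fun d => Classical.choose (hex d) with hctdef
    have hct : ∀ d, orbRel ({S, A} : Set (Perm (D × G))) (d₀, 1) (d, ct d) :=
      fun d => Classical.choose_spec (hex d)
    have huniq : ∀ d g, orbRel ({S, A} : Set (Perm (D × G))) (d₀, 1) (d, g) → g = ct d := by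
      intro d g hg
      exact hfree d g (ct d) (orbRel_trans (orbRel_symm hg) (hct d))
    have hctS : ∀ d, ct ((σ * α) d) = ct d := by
      intro d
      refine (huniq _ _ ?_).symm
      refine orbRel_trans (hct d) ?_
      exact ⟨S, Subgroup.subset_closure (Set.mem_insert _ _), liftS_pair _ _ _⟩
    have hctA : ∀ d, ct (α d) = (κ d)⁻¹ * ct d := by
      intro d
      refine (huniq _ _ ?_).symm
      refine orbRel_trans (hct d) ?_
      exact ⟨A, Subgroup.subset_closure (Set.mem_insert_of_mem _ rfl), hAapply _⟩
    have hdescct : ∀ d d' : D, (σ * α).SameCycle d d' → ct d = ct d' := by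
      intro d d' hsc
      obtain ⟨n, _, _, hn⟩ := hsc.exists_pow_eq (σ * α)
      have hstep : ∀ n : ℕ, ct (((σ * α) ^ n) d) = ct d := by
        intro n
        induction n with
        | zero => simp
        | succ n ihn => rw [pow_succ', Perm.mul_apply, hctS]; exact ihn
      rw [← hn]
      exact (hstep n).symm
    set cfun : Quotient (σ * α).cycleSetoid → G := Quotient.lift ct hdescct with hcfun
    have hcq : ∀ d, cfun (Quotient.mk (σ * α).cycleSetoid d) = ct d := fun d => rfl
    have hproper : ∀ d, cfun (Quotient.mk (σ * α).cycleSetoid d) ≠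
        cfun (Quotient.mk (σ * α).cycleSetoid (α d)) := by
      intro d heq
      rw [hcq, hcq, hctA] at heq
      have h5 : (κ d)⁻¹ = 1 := (right_eq_mul.mp heq)
      exact hni d (by rwa [inv_eq_one] at h5)
    have hc₀ : κof ⟨cfun, hproper⟩ = κ := by
      funext d
      rw [hκof]
      simp only [hcq, hctA]
      rw [mul_inv_rev, inv_inv, mul_inv_cancel_left]
    refine ⟨⟨⟨cfun, hproper⟩, hc₀⟩, ?_⟩
    -- fiber cardinality
    set c₀ : {c : Quotient (σ * α).cycleSetoid → G //
        ∀ d, c (Quotient.mk (σ * α).cycleSetoid d) ≠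
          c (Quotient.mk (σ * α).cycleSetoid (α d))} := ⟨cfun, hproper⟩ with hc₀def
    have hΦ : ∀ g : G, ∀ d, (fun q => c₀.1 q * g) (Quotient.mk (σ * α).cycleSetoid d) ≠
        (fun q => c₀.1 q * g) (Quotient.mk (σ * α).cycleSetoid (α d)) := by
      intro g d hcon
      exact c₀.2 d (mul_right_cancel hcon)
    have hΦeq : ∀ g : G, κof ⟨fun q => c₀.1 q * g, hΦ g⟩ = κ := by
      intro g
      funext d
      rw [hκof, ← hc₀, hκof]
      simp only
      group
    set Φ : G → {c // κof c = κ} := fun g => ⟨⟨fun q => c₀.1 q * g, hΦ g⟩, hΦeq g⟩ with hΦdef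
    have hΦbij : Function.Bijective Φ := by
      constructor
      · intro g g' hgg
        have h6 : c₀.1 (Quotient.mk (σ * α).cycleSetoid d₀) * g =
            c₀.1 (Quotient.mk (σ * α).cycleSetoid d₀) * g' :=
          congrFun (congrArg (fun φ => φ.1.1) hgg) _
        exact mul_left_cancel h6
      · rintro ⟨⟨cf, cfp⟩, hcf⟩
        -- the difference function is constant
        set val : D → G := fun d => (c₀.1 (Quotient.mk (σ * α).cycleSetoid d))⁻¹ *
          cf (Quotient.mk (σ * α).cycleSetoid d) with hval
        have hstep : ∀ d, val d = val (α d) := by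
          intro d
          have e1 := congrFun hc₀ d
          have e2 := congrFun hcf d
          rw [hκof] at e1 e2
          have e3 : c₀.1 (Quotient.mk (σ * α).cycleSetoid d) *
              (c₀.1 (Quotient.mk (σ * α).cycleSetoid (α d)))⁻¹ =
              cf (Quotient.mk (σ * α).cycleSetoid d) *
              (cf (Quotient.mk (σ * α).cycleSetoid (α d)))⁻¹ := by
            rw [e1]; exact e2.symm
          have h10 : c₀.1 (Quotient.mk (σ * α).cycleSetoid d) *
              (c₀.1 (Quotient.mk (σ * α).cycleSetoid (α d)))⁻¹ *
              cf (Quotient.mk (σ * α).cycleSetoid (α d)) =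
              cf (Quotient.mk (σ * α).cycleSetoid d) := by
            rw [e3, inv_mul_cancel_right]
          rw [hval]
          simp only
          rw [← h10]
          group
        have hstepq : ∀ d, val ((σ * α) d) = val d := by
          intro d
          rw [hval]
          simp only
          have h11 : Quotient.mk (σ * α).cycleSetoid ((σ * α) d) =
              Quotient.mk (σ * α).cycleSetoid d :=
            (Quotient.sound (⟨1, by rw [zpow_one]⟩ : (σ * α).SameCycle d ((σ * α) d))).symm
          rw [h11]
        have hval_inv : ∀ w ∈ Subgroup.closure ({σ, α} : Set (Perm D)), ∀ d,
            val (w d) = val d := by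
          intro w hw
          induction hw using Subgroup.closure_induction with
          | mem x hx =>
            rcases hx with hx | hx
            · have hx' : x = σ := hx
              intro d
              rw [hx']
              have h12 : σ d = (σ * α) (α d) := by rw [Perm.mul_apply, hinv]
              rw [h12, hstepq (α d)]
              exact (hstep d).symm
            · have hx' : x = α := hx
              intro d
              rw [hx']
              exact (hstep d).symm
          | one => intro d; rfl
          | mul x y hx hy ihx ihy =>
            intro d
            rw [Perm.mul_apply, ihx (y d), ihy d]
          | inv x hx ihx =>
            intro d
            have h13 := ihx (x⁻¹ d)
            rw [perm_apply_inv_self'] at h13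
            exact h13.symm
        have hvalconst : ∀ d, val d = val d₀ := by
          intro d
          obtain ⟨w, hw, hwd⟩ := hconn d₀ d
          rw [← hwd]
          exact hval_inv w hw d₀
        refine ⟨val d₀, ?_⟩
        rw [hΦdef]
        apply Subtype.ext
        apply Subtype.ext
        funext q
        obtain ⟨d, rfl⟩ := Quotient.exists_rep q
        simp only
        have h14 := hvalconst d
        rw [← h14]
        show c₀.1 (Quotient.mk (σ * α).cycleSetoid d) *
          ((c₀.1 (Quotient.mk (σ * α).cycleSetoid d))⁻¹ *
            cf (Quotient.mk (σ * α).cycleSetoid d)) =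
          cf (Quotient.mk (σ * α).cycleSetoid d)
        rw [mul_inv_cancel_left]
    rw [← Nat.card_eq_of_bijective Φ hΦbij]
end

section
/- Let G be a finite group, M = (D, σ, α) a connected combinatorial map and κ a local G-tension on M. Then there exist a connected combinatorial map M' = (D', σ', α') and a covering p : M' → M such that κ∘p is a global G-tension on M'. -/
open Equiv

theorem Equiv.Perm.apply_inv_self {α : Type*} (f : Equiv.Perm α) (x : α) : f (f⁻¹ x) = x :=
  (Equiv.eq_symm_apply f).mp rfl

lemma chain_prod_aux {D' G : Type*} [Group G] (f q : D' → G) {R : D' → D' → Prop}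
    (hR : ∀ a b, R a b → f b = f a * q a) :
    ∀ (W : List D') (x : D'), List.Chain R x W →
      f ((x :: W).getLast (List.cons_ne_nil x W)) * q ((x :: W).getLast (List.cons_ne_nil x W)) =
        f x * ((x :: W).map q).prod := by
  intro W
  induction W with
  | nil => intro x _; simp
  | cons y W ih =>
    intro x hc
    rw [List.Chain, List.chain_cons] at hc
    have h1 := hR x y hc.1
    have h2 := ih y hc.2
    rw [List.getLast_cons (List.cons_ne_nil y W), h2, h1]
    simp [mul_assoc]

lemma snd_pow_aux {D G : Type*} (π : Equiv.Perm (D × G)) (hs : ∀ x, (π x).2 = x.2) :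
    ∀ (n : ℤ) (x), ((π ^ n) x).2 = x.2 := by
  have hsi : ∀ x, (π⁻¹ x).2 = x.2 := by
    intro x
    conv_rhs => rw [← Equiv.Perm.apply_inv_self π x]
    rw [hs]
  intro n
  induction n using Int.induction_on with
  | zero => simp
  | succ n ih =>
    intro x
    rw [zpow_add_one, Equiv.Perm.mul_apply, ih, hs]
  | pred n ih =>
    intro x
    rw [zpow_sub_one, Equiv.Perm.mul_apply, ih, hsi]

/-- Every local `G`-tension on a connected combinatorial map becomes a global `G`-tension
after pulling back along a suitable covering by a connected combinatorial map. -/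
theorem exists_global_covering
    {D : Type} [Fintype D] [Nonempty D] (σ α : Equiv.Perm D)
    (hinv : ∀ d, α (α d) = d) (hfpf : ∀ d, α d ≠ d)
    (hconn : MapConnected σ α)
    {G : Type} [Group G] [Fintype G]
    (κ : D → G) (hκ : IsLocalTension σ α κ) :
    ∃ (D' : Type) (_ : Fintype D') (σ' α' : Equiv.Perm D'),
      (∀ d, α' (α' d) = d) ∧ (∀ d, α' d ≠ d) ∧ MapConnected σ' α' ∧
      ∃ p : D' → D, IsMapCovering σ' α' σ α p ∧ IsGlobalTension σ' α' (κ ∘ p) := by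
  classical
  obtain ⟨hlab, -⟩ := hκ
  set σ' : Perm (D × G) := σ.prodCongr (Equiv.refl G) with hσ'def
  have hσ'snd : ∀ x : D × G, (σ' x).2 = x.2 := fun x => rfl
  have hαinvol : Function.Involutive (fun x : D × G => (α x.1, x.2 * κ x.1)) := by
    intro x
    simp [hinv, hlab x.1, mul_assoc]
  set α' : Perm (D × G) := hαinvol.toPerm with hα'def
  set x₀ : D × G := (Classical.arbitrary D, 1) with hx₀def
  set H := Subgroup.closure ({σ', α'} : Set (Perm (D × G))) with hHdef
  set S : Set (D × G) := {x | ∃ g ∈ H, g x₀ = x} with hSdef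
  have hx₀ : x₀ ∈ S := ⟨1, one_mem _, rfl⟩
  have hσ'H : σ' ∈ H := Subgroup.subset_closure (Set.mem_insert _ _)
  have hα'H : α' ∈ H := Subgroup.subset_closure (Set.mem_insert_of_mem _ rfl)
  have hSinv : ∀ g ∈ H, ∀ x ∈ S, g x ∈ S := by
    rintro g hg x ⟨g', hg', rfl⟩
    exact ⟨g * g', mul_mem hg hg', rfl⟩
  have hσ'S : ∀ x, x ∈ S ↔ σ' x ∈ S := by
    intro x
    refine ⟨hSinv σ' hσ'H x, fun h => ?_⟩
    simpa using hSinv σ'⁻¹ (inv_mem hσ'H) _ h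
  have hα'S : ∀ x, x ∈ S ↔ α' x ∈ S := by
    intro x
    refine ⟨hSinv α' hα'H x, fun h => ?_⟩
    simpa using hSinv α'⁻¹ (inv_mem hα'H) _ h
  set σ'' : Perm ↥S := σ'.subtypePerm (fun x => (hσ'S x).symm) with hσ''def
  set α'' : Perm ↥S := α'.subtypePerm (fun x => (hα'S x).symm) with hα''def
  -- same cycle under σ'' implies equal second coordinates
  have hsc : ∀ a b : ↥S, σ''.SameCycle a b → (a : D × G).2 = (b : D × G).2 := by
    rintro a b ⟨n, hn⟩
    have hval : ((σ'' ^ n) a : D × G) = b := congrArg Subtype.val hn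
    rw [hσ''def, Equiv.Perm.subtypePerm_zpow] at hval
    have hval2 : (σ' ^ n) (a : D × G) = b := hval
    rw [← hval2]
    exact (snd_pow_aux σ' hσ'snd n _).symm
  have hα''inv : ∀ x : ↥S, α'' (α'' x) = x := fun x => Subtype.ext (hαinvol x.val)
  have hα''fpf : ∀ x : ↥S, α'' x ≠ x := by
    intro x h
    exact hfpf (x : D × G).1 (congrArg (fun y : ↥S => (y : D × G).1) h)
  -- lifting elements of H to permutations of S in the closure of {σ'', α''}
  have hlift : ∀ g ∈ H,
      (∀ x : ↥S, ∃ h ∈ Subgroup.closure ({σ'', α''} : Set (Perm ↥S)),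
        ((h x : ↥S) : D × G) = g (x : D × G)) ∧
      (∀ x : ↥S, ∃ h ∈ Subgroup.closure ({σ'', α''} : Set (Perm ↥S)),
        ((h x : ↥S) : D × G) = g⁻¹ (x : D × G)) := by
    intro g hg
    induction hg using Subgroup.closure_induction with
    | mem y hy =>
      rcases hy with rfl | rfl
      · constructor
        · exact fun x => ⟨σ'', Subgroup.subset_closure (Set.mem_insert _ _), rfl⟩
        · refine fun x => ⟨σ''⁻¹, inv_mem (Subgroup.subset_closure (Set.mem_insert _ _)), ?_⟩
          apply σ'.injective
          show σ' ((σ''⁻¹ x : ↥S) : D × G) = σ' (σ'⁻¹ (x : D × G))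
          rw [Equiv.Perm.apply_inv_self]
          exact congrArg Subtype.val (Equiv.Perm.apply_inv_self σ'' x)
      · constructor
        · exact fun x => ⟨α'', Subgroup.subset_closure (Set.mem_insert_of_mem _ rfl), rfl⟩
        · refine fun x => ⟨α''⁻¹, inv_mem (Subgroup.subset_closure (Set.mem_insert_of_mem _ rfl)), ?_⟩
          apply α'.injective
          show α' ((α''⁻¹ x : ↥S) : D × G) = α' (α'⁻¹ (x : D × G))
          rw [Equiv.Perm.apply_inv_self]
          exact congrArg Subtype.val (Equiv.Perm.apply_inv_self α'' x)
    | one => exact ⟨fun x => ⟨1, one_mem _, rfl⟩, fun x => ⟨1, one_mem _, by simp⟩⟩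
    | mul a b ha hb pa pb =>
      constructor
      · intro x
        obtain ⟨h₂, hh₂, e₂⟩ := pb.1 x
        obtain ⟨h₁, hh₁, e₁⟩ := pa.1 (h₂ x)
        refine ⟨h₁ * h₂, mul_mem hh₁ hh₂, ?_⟩
        rw [Equiv.Perm.mul_apply, e₁, e₂, Equiv.Perm.mul_apply]
      · intro x
        obtain ⟨h₁, hh₁, e₁⟩ := pa.2 x
        obtain ⟨h₂, hh₂, e₂⟩ := pb.2 (h₁ x)
        refine ⟨h₂ * h₁, mul_mem hh₂ hh₁, ?_⟩
        rw [Equiv.Perm.mul_apply, e₂, e₁, mul_inv_rev, Equiv.Perm.mul_apply]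
    | inv a ha pa =>
      exact ⟨pa.2, by simpa using pa.1⟩
  have hconn'' : MapConnected σ'' α'' := by
    rintro ⟨x, gx, hgx, ex⟩ ⟨y, gy, hgy, ey⟩
    obtain ⟨h, hh, e⟩ := (hlift (gy * gx⁻¹) (mul_mem hgy (inv_mem hgx))).1 ⟨x, gx, hgx, ex⟩
    refine ⟨h, hh, Subtype.ext ?_⟩
    rw [e]
    show (gy * gx⁻¹) x = y
    rw [← ex, ← ey]
    simp [Equiv.Perm.mul_apply]
  -- fibers over every dart
  have hαinvD : α⁻¹ = α := by
    refine Equiv.ext fun d => ?_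
    rw [Equiv.Perm.inv_eq_iff_eq]
    exact (hinv d).symm
  have hα'invD : α'⁻¹ = α' := by
    refine Equiv.ext fun d => ?_
    rw [Equiv.Perm.inv_eq_iff_eq]
    exact (hαinvol d).symm
  have hfib : ∀ g ∈ Subgroup.closure ({σ, α} : Set (Perm D)),
      (∀ x ∈ S, ∃ y ∈ S, y.1 = g x.1) ∧ (∀ x ∈ S, ∃ y ∈ S, y.1 = g⁻¹ x.1) := by
    intro g hg
    induction hg using Subgroup.closure_induction with
    | mem y hy =>
      rcases hy with h | h <;> rw [h]
      · constructor
        · exact fun x hx => ⟨σ' x, hSinv σ' hσ'H x hx, rfl⟩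
        · intro x hx
          refine ⟨σ'⁻¹ x, hSinv σ'⁻¹ (inv_mem hσ'H) x hx, ?_⟩
          apply Equiv.injective σ
          show σ (σ'⁻¹ x).1 = σ (σ⁻¹ x.1)
          calc σ (σ'⁻¹ x).1 = (σ' (σ'⁻¹ x)).1 := rfl
            _ = x.1 := by rw [Equiv.Perm.apply_inv_self]
            _ = σ (σ⁻¹ x.1) := (Equiv.Perm.apply_inv_self σ x.1).symm
      · constructor
        · exact fun x hx => ⟨α' x, hSinv α' hα'H x hx, rfl⟩
        · intro x hx
          refine ⟨α' x, hSinv α' hα'H x hx, ?_⟩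
          rw [hαinvD]
          exact rfl
    | one => exact ⟨fun x hx => ⟨x, hx, rfl⟩, fun x hx => ⟨x, hx, by simp⟩⟩
    | mul a b ha hb pa pb =>
      constructor
      · intro x hx
        obtain ⟨y, hy, ey⟩ := pb.1 x hx
        obtain ⟨z, hz, ez⟩ := pa.1 y hy
        exact ⟨z, hz, by rw [ez, ey, Equiv.Perm.mul_apply]⟩
      · intro x hx
        obtain ⟨y, hy, ey⟩ := pa.2 x hx
        obtain ⟨z, hz, ez⟩ := pb.2 y hy
        exact ⟨z, hz, by rw [ez, ey, mul_inv_rev, Equiv.Perm.mul_apply]⟩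
    | inv a ha pa =>
      exact ⟨pa.2, by simpa using pa.1⟩
  refine ⟨↥S, Fintype.ofFinite _, σ'', α'', hα''inv, hα''fpf, hconn'',
    fun x => (x : D × G).1, ⟨?_, fun d => rfl, fun d => rfl, ?_⟩, ?_, ?_⟩
  · -- surjectivity
    intro d
    obtain ⟨g, hg, hgd⟩ := hconn (Classical.arbitrary D) d
    obtain ⟨y, hy, e⟩ := (hfib g hg).1 x₀ hx₀
    exact ⟨⟨y, hy⟩, e.trans hgd⟩
  · -- injectivity on cycles
    intro a b hab hpab
    exact Subtype.ext (Prod.ext hpab (hsc a b hab))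
  · -- labelling
    intro x
    exact hlab (x : D × G).1
  · -- closed walks
    rintro W ⟨hne, hchain, hclose⟩
    cases W with
    | nil => exact absurd rfl hne
    | cons x l =>
      have hc : List.Chain (fun a b : ↥S => σ''.SameCycle (α'' a) b) x l := hchain
      have hR : ∀ a b : ↥S, σ''.SameCycle (α'' a) b →
          (b : D × G).2 = (a : D × G).2 * (κ ∘ fun y : ↥S => (y : D × G).1) a := by
        intro a b hab
        have h2 := hsc _ _ hab
        rw [← h2]
        rfl
      have key := chain_prod_aux (fun y : ↥S => (y : D × G).2)
        (κ ∘ fun y : ↥S => (y : D × G).1) hR l x hc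
      have hc2 := hsc _ _ hclose
      have e1 : ((((x :: l).getLast (List.cons_ne_nil x l)) : D × G)).2 *
          (κ ∘ fun y : ↥S => (y : D × G).1) ((x :: l).getLast (List.cons_ne_nil x l)) =
          ((x : D × G)).2 := hc2
      rw [key] at e1
      exact mul_eq_left.mp e1
end

section
/- Let G be a finite group, M = (D, σ, α) a connected combinatorial map and κ a local G-tension on M. Then there exist a connected combinatorial map M' and a covering p : M' → M such that κ∘p is a global G-tension on M', and which is minimal in the following sense: for every connected combinatorial map M'' and every covering r : M'' → M such that κ∘r is a global G-tension on M'', there exists a covering q : M'' → M' with p∘q = r. -/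
open Equiv

/-!
The minimal global covering is a connected component of the derived map of `κ`: on darts
`D × G`, `σ` acts on the first coordinate and the edge involution sends `(d, g)` to
`(α d, g * κ d)`. The second coordinate is a potential for `κ ∘ fst` there, so `κ ∘ fst` is a
global tension. Conversely, when `κ ∘ r` is a global tension on a connected covering, heights of
walks from a base dart are well defined and give a potential `f`; then `e ↦ (r e, f e)`
commutes with the permutations and maps onto the component of the base point.
-/

open Function

section Invariance

variable {X Y : Type*}

theorem Equiv.Perm.apply_iff_of_mem_closure {S : Set (Perm X)} {P : X → Prop}
    (hS : ∀ s ∈ S, ∀ x, P (s x) ↔ P x) {g : Perm X} (hg : g ∈ Subgroup.closure S) (x : X) :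
    P (g x) ↔ P x := by
  induction hg using Subgroup.closure_induction generalizing x with
  | mem s hs => exact hS s hs x
  | one => rfl
  | mul g h _ _ hg hh => exact (hg (h x)).trans (hh x)
  | inv g _ hg => simpa using (hg (g⁻¹ x)).symm

theorem Equiv.Perm.SameCycle.apply_eq_of_invariant {σ : Perm X} {f : X → Y}
    (hf : ∀ x, f (σ x) = f x) {x y : X} (h : σ.SameCycle x y) : f x = f y := by
  obtain ⟨i, rfl⟩ := h
  have hi : σ ^ i ∈ Subgroup.closure {σ} :=
    Subgroup.zpow_mem _ (Subgroup.subset_closure (Set.mem_singleton σ)) i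
  exact ((Perm.apply_iff_of_mem_closure (P := fun z => f z = f x)
    (by rintro _ ⟨⟩ z; rw [hf]) hi x).2 (Eq.refl _)).symm

theorem Function.Semiconj.perm_apply_mem_range_iff {φ : X → Y} {σX : Perm X} {σY : Perm Y}
    (h : Semiconj φ σX σY) (y : Y) : σY y ∈ Set.range φ ↔ y ∈ Set.range φ := by
  constructor
  · rintro ⟨x, hx⟩
    exact ⟨σX⁻¹ x, σY.injective (by rw [← h]; simpa using hx)⟩
  · rintro ⟨x, rfl⟩
    exact ⟨σX x, h x⟩

end Invariance

section Component

variable {X Y : Type*} {σ α : Perm X}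

abbrev mapComponent (σ α : Perm X) (x₀ : X) : Set X :=
  MulAction.orbit (Subgroup.closure {σ, α}) x₀

def mapComponent.sigma (σ α : Perm X) (x₀ : X) : Perm (mapComponent σ α x₀) :=
  MulAction.toPerm (⟨σ, Subgroup.subset_closure (Set.mem_insert σ {α})⟩ : Subgroup.closure {σ, α})

def mapComponent.alpha (σ α : Perm X) (x₀ : X) : Perm (mapComponent σ α x₀) :=
  MulAction.toPerm (⟨α, Subgroup.subset_closure (Set.mem_insert_of_mem σ rfl)⟩ :
    Subgroup.closure {σ, α})

theorem mapComponent.mapConnected (σ α : Perm X) (x₀ : X) :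
    MapConnected (mapComponent.sigma σ α x₀) (mapComponent.alpha σ α x₀) := by
  let H := Subgroup.closure ({σ, α} : Set (Perm X))
  let ρ := MulAction.toPermHom H (mapComponent σ α x₀)
  have hρ : ∀ h : H,
      ρ h ∈ Subgroup.closure {mapComponent.sigma σ α x₀, mapComponent.alpha σ α x₀} := by
    suffices Subgroup.closure (((↑) : H → Perm X) ⁻¹' {σ, α}) ≤ (Subgroup.closure _).comap ρ by
      rw [Subgroup.closure_closure_coe_preimage] at this
      exact fun h => this (Subgroup.mem_top h)
    rw [Subgroup.closure_le]
    rintro h (hσ | hα)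
    · rw [show h = ⟨σ, Subgroup.subset_closure (Set.mem_insert σ {α})⟩ from Subtype.ext hσ]
      exact Subgroup.subset_closure (Set.mem_insert _ _)
    · rw [show h = ⟨α, Subgroup.subset_closure (Set.mem_insert_of_mem σ rfl)⟩ from Subtype.ext hα]
      exact Subgroup.subset_closure (Set.mem_insert_of_mem _ rfl)
  intro y y'
  obtain ⟨h, rfl⟩ := MulAction.exists_smul_eq H y y'
  exact ⟨ρ h, hρ h, rfl⟩

theorem apply_mem_mapComponent_iff {x₀ : X} {g : Perm X} (hg : g ∈ ({σ, α} : Set (Perm X)))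
    (y : X) : g y ∈ mapComponent σ α x₀ ↔ y ∈ mapComponent σ α x₀ := by
  change (⟨g, Subgroup.subset_closure hg⟩ : Subgroup.closure {σ, α}) • y ∈ _ ↔ _
  rw [← MulAction.orbit_eq_iff, MulAction.orbit_smul, MulAction.orbit_eq_iff]

theorem forall_mem_mapComponent_of_invariant {P : X → Prop} (hσ : ∀ x, P (σ x) ↔ P x)
    (hα : ∀ x, P (α x) ↔ P x) {x₀ : X} (h₀ : P x₀) : ∀ x ∈ mapComponent σ α x₀, P x := by
  rintro _ ⟨⟨g, hg⟩, rfl⟩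
  exact (Perm.apply_iff_of_mem_closure (by rintro s (rfl | rfl); exacts [hσ, hα]) hg x₀).2 h₀

theorem MapConnected.mem_mapComponent (hconn : MapConnected σ α) (x₀ x : X) :
    x ∈ mapComponent σ α x₀ :=
  let ⟨g, hg, hgx⟩ := hconn x₀ x
  ⟨⟨g, hg⟩, hgx⟩

theorem MapConnected.forall_of_invariant (hconn : MapConnected σ α) {P : X → Prop}
    (hσ : ∀ x, P (σ x) ↔ P x) (hα : ∀ x, P (α x) ↔ P x) {x₀ : X} (h₀ : P x₀) (x : X) : P x :=
  forall_mem_mapComponent_of_invariant hσ hα h₀ x (hconn.mem_mapComponent x₀ x)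

theorem MapConnected.exists_isMapCovering_mapComponent {σY αY : Perm Y} {φ : X → Y}
    (hconn : MapConnected σ α) (hσ : Semiconj φ σ σY) (hα : Semiconj φ α αY)
    (hφ : ∀ x₁ x₂, σ.SameCycle x₁ x₂ → φ x₁ = φ x₂ → x₁ = x₂) {x₀ : X} {y₀ : Y}
    (h₀ : φ x₀ = y₀) :
    ∃ q : X → mapComponent σY αY y₀, (∀ x, (q x : Y) = φ x) ∧
      IsMapCovering σ α (mapComponent.sigma σY αY y₀) (mapComponent.alpha σY αY y₀) q := by
  subst h₀
  have hmaps : ∀ x, φ x ∈ mapComponent σY αY (φ x₀) :=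
    hconn.forall_of_invariant (P := fun x => φ x ∈ mapComponent σY αY (φ x₀))
      (fun x => by rw [hσ x]; exact apply_mem_mapComponent_iff (.inl rfl) _)
      (fun x => by rw [hα x]; exact apply_mem_mapComponent_iff (.inr rfl) _)
      (MulAction.mem_orbit_self _)
  refine ⟨fun x => ⟨φ x, hmaps x⟩, fun _ => rfl, ?_, fun x => Subtype.ext (hσ x),
    fun x => Subtype.ext (hα x), fun x₁ x₂ hc h => hφ x₁ x₂ hc (congrArg Subtype.val h)⟩
  rintro ⟨y, hy⟩
  obtain ⟨x, rfl⟩ := forall_mem_mapComponent_of_invariant (P := (· ∈ Set.range φ))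
    hσ.perm_apply_mem_range_iff hα.perm_apply_mem_range_iff ⟨x₀, rfl⟩ y hy
  exact ⟨x, rfl⟩

end Component

section Walks

variable {E G : Type*} [Group G] {σ α : Perm E} {κ : E → G}

/-- `W` leaves the vertex of `v` and arrives at the vertex of `w`, vertices being represented by
any of their darts; the empty walk stays at one vertex. -/
def IsWalk (σ α : Perm E) : E → E → List E → Prop
  | v, w, [] => σ.SameCycle v w
  | v, w, d :: W => σ.SameCycle v d ∧ IsWalk σ α (α d) w W

theorem IsWalk.of_sameCycle_left {v v' w : E} {W : List E} (h : σ.SameCycle v v')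
    (hW : IsWalk σ α v' w W) : IsWalk σ α v w W := by
  cases W with
  | nil => exact h.trans hW
  | cons d W => exact ⟨h.trans hW.1, hW.2⟩

theorem IsWalk.append {u v w : E} {W₁ W₂ : List E} (h₁ : IsWalk σ α u v W₁)
    (h₂ : IsWalk σ α v w W₂) : IsWalk σ α u w (W₁ ++ W₂) := by
  induction W₁ generalizing u with
  | nil => exact h₂.of_sameCycle_left h₁
  | cons d W₁ ih => exact ⟨h₁.1, ih h₁.2⟩

theorem IsWalk.of_sameCycle_right {v w w' : E} {W : List E} (hW : IsWalk σ α v w W)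
    (h : σ.SameCycle w w') : IsWalk σ α v w' W := by
  simpa using hW.append (W₂ := []) h

theorem isWalk_singleton (d : E) : IsWalk σ α d (α d) [d] :=
  ⟨.refl σ d, .refl σ (α d)⟩

theorem IsWalk.reverse (hinv : ∀ e, α (α e) = e) {v w : E} {W : List E}
    (h : IsWalk σ α v w W) : IsWalk σ α w v (W.map α).reverse := by
  induction W generalizing v with
  | nil => exact h.symm
  | cons d W ih =>
    rw [List.map_cons, List.reverse_cons]
    refine (ih h.2).append ⟨.refl σ (α d), ?_⟩
    rw [hinv]
    exact h.1.symm

theorem isWalk_cons_iff {v w d : E} {W : List E} :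
    IsWalk σ α v w (d :: W) ↔ σ.SameCycle v d ∧
      (d :: W).IsChain (fun a b => σ.SameCycle (α a) b) ∧
      σ.SameCycle (α ((d :: W).getLast (List.cons_ne_nil d W))) w := by
  induction W generalizing v d with
  | nil => simp [IsWalk]
  | cons e W ih =>
    simp only [IsWalk, List.isChain_cons_cons, List.getLast_cons_cons] at ih ⊢
    rw [ih]
    tauto

theorem isClosedWalk_cons_iff {d : E} {W : List E} :
    IsClosedWalk σ α (d :: W) ↔ IsWalk σ α d d (d :: W) := by
  refine ⟨fun ⟨_, hc, h⟩ => isWalk_cons_iff.2 ⟨.refl σ d, hc, h⟩, fun h => ?_⟩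
  obtain ⟨-, hc, h⟩ := isWalk_cons_iff.1 h
  exact ⟨List.cons_ne_nil d W, hc, h⟩

theorem IsWalk.prod_map_eq_inv_mul {f : E → G} (hfσ : ∀ e, f (σ e) = f e)
    (hfα : ∀ e, f (α e) = f e * κ e) {v w : E} {W : List E} (h : IsWalk σ α v w W) :
    (W.map κ).prod = (f v)⁻¹ * f w := by
  induction W generalizing v with
  | nil => rw [h.apply_eq_of_invariant hfσ]; simp
  | cons d W ih =>
    rw [List.map_cons, List.prod_cons, ih h.2, hfα, h.1.apply_eq_of_invariant hfσ]
    group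

theorem isGlobalTension_of_potential (hκ : IsGLabelling α κ) {f : E → G}
    (hfσ : ∀ e, f (σ e) = f e) (hfα : ∀ e, f (α e) = f e * κ e) : IsGlobalTension σ α κ := by
  refine ⟨hκ, fun W hW => ?_⟩
  obtain ⟨d, W, rfl⟩ := List.exists_cons_of_ne_nil hW.1
  rw [(isClosedWalk_cons_iff.1 hW).prod_map_eq_inv_mul hfσ hfα, inv_mul_cancel]

theorem IsGLabelling.prod_map_reverse_map (hκ : IsGLabelling α κ) (W : List E) :
    ((W.map α).reverse.map κ).prod = (W.map κ).prod⁻¹ := by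
  rw [List.prod_inv_reverse, List.map_reverse, List.map_map, List.map_map]
  congr 3
  funext e
  exact hκ e

theorem IsGlobalTension.prod_map_eq_one_of_isWalk (hκ : IsGlobalTension σ α κ) {v : E}
    {W : List E} (h : IsWalk σ α v v W) : (W.map κ).prod = 1 := by
  cases W with
  | nil => rfl
  | cons d W =>
    exact hκ.2 _ (isClosedWalk_cons_iff.2
      ((h.of_sameCycle_left h.1.symm).of_sameCycle_right h.1))

theorem IsGlobalTension.prod_map_eq_of_isWalk (hinv : ∀ e, α (α e) = e)
    (hκ : IsGlobalTension σ α κ) {v w : E} {W₁ W₂ : List E} (h₁ : IsWalk σ α v w W₁)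
    (h₂ : IsWalk σ α v w W₂) : (W₁.map κ).prod = (W₂.map κ).prod := by
  have h := hκ.prod_map_eq_one_of_isWalk (h₁.append (h₂.reverse hinv))
  rwa [List.map_append, List.prod_append, hκ.1.prod_map_reverse_map, mul_inv_eq_one] at h

theorem MapConnected.exists_isWalk (hinv : ∀ e, α (α e) = e) (hconn : MapConnected σ α)
    (v w : E) : ∃ W, IsWalk σ α v w W := by
  refine hconn.forall_of_invariant (P := fun w => ∃ W, IsWalk σ α v w W) (fun e => ?_)
    (fun e => ?_) ⟨[], .refl σ v⟩ w
  · have he : σ.SameCycle (σ e) e := Perm.sameCycle_apply_left.2 (.refl σ e)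
    exact ⟨fun ⟨W, h⟩ => ⟨W, h.of_sameCycle_right he⟩,
      fun ⟨W, h⟩ => ⟨W, h.of_sameCycle_right he.symm⟩⟩
  · constructor
    · rintro ⟨W, h⟩
      exact ⟨W ++ [α e], by simpa [hinv] using h.append (isWalk_singleton (α e))⟩
    · rintro ⟨W, h⟩
      exact ⟨W ++ [e], h.append (isWalk_singleton e)⟩

theorem IsGlobalTension.exists_potential (hinv : ∀ e, α (α e) = e) (hconn : MapConnected σ α)
    (hκ : IsGlobalTension σ α κ) (e₀ : E) :
    ∃ f : E → G, f e₀ = 1 ∧ (∀ e, f (σ e) = f e) ∧ ∀ e, f (α e) = f e * κ e := by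
  choose W hW using hconn.exists_isWalk hinv e₀
  have height : ∀ e W', IsWalk σ α e₀ e W' → ((W e).map κ).prod = (W'.map κ).prod :=
    fun e _ h => hκ.prod_map_eq_of_isWalk hinv (hW e) h
  refine ⟨fun e => ((W e).map κ).prod, hκ.prod_map_eq_one_of_isWalk (hW e₀), fun e => ?_,
    fun e => ?_⟩
  · exact height _ _ ((hW e).of_sameCycle_right (Perm.sameCycle_apply_right.2 (.refl σ e)))
  · simpa using height _ _ ((hW e).append (isWalk_singleton e))

end Walks

section Derived

variable {D : Type*} (G : Type*) [Group G]

def derivedSigma (σ : Perm D) : Perm (D × G) :=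
  σ.prodCongr (Equiv.refl G)

variable {G}

def derivedAlpha (α : Perm D) (κ : D → G) : Perm (D × G) :=
  Equiv.prodShear α fun d => Equiv.mulRight (κ d)

variable {σ α : Perm D} {κ : D → G}

theorem derivedAlpha_involutive (hinv : ∀ d, α (α d) = d) (hκ : IsGLabelling α κ) (y : D × G) :
    derivedAlpha α κ (derivedAlpha α κ y) = y := by
  simp [derivedAlpha, hinv, hκ y.1]

theorem MapConnected.exists_mem_mapComponent_derived (hconn : MapConnected σ α) (y₀ : D × G)
    (d : D) : ∃ g, (d, g) ∈ mapComponent (derivedSigma G σ) (derivedAlpha α κ) y₀ := by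
  refine hconn.forall_of_invariant
    (P := fun d => ∃ g, (d, g) ∈ mapComponent (derivedSigma G σ) (derivedAlpha α κ) y₀)
    (fun d => exists_congr fun g => apply_mem_mapComponent_iff (.inl rfl) (d, g))
    (fun d => ⟨fun ⟨g, hg⟩ => ?_, fun ⟨g, hg⟩ =>
      ⟨g * κ d, (apply_mem_mapComponent_iff (.inr rfl) (d, g)).2 hg⟩⟩)
    ⟨y₀.2, MulAction.mem_orbit_self y₀⟩ d
  refine ⟨g * (κ d)⁻¹, (apply_mem_mapComponent_iff (.inr rfl) _).1 ?_⟩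
  simpa [derivedAlpha] using hg

theorem MapConnected.isMapCovering_derived_fst (hconn : MapConnected σ α) (y₀ : D × G) :
    IsMapCovering (mapComponent.sigma (derivedSigma G σ) (derivedAlpha α κ) y₀)
      (mapComponent.alpha (derivedSigma G σ) (derivedAlpha α κ) y₀) σ α
      (fun y => (y : D × G).1) := by
  refine ⟨fun d => ?_, fun _ => rfl, fun _ => rfl, fun y₁ y₂ hc h => ?_⟩
  · obtain ⟨g, hg⟩ := hconn.exists_mem_mapComponent_derived y₀ d
    exact ⟨⟨(d, g), hg⟩, rfl⟩
  · exact Subtype.ext (Prod.ext h (hc.apply_eq_of_invariant (f := Prod.snd ∘ Subtype.val)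
      fun _ => rfl))

theorem isGlobalTension_derived_fst (hκ : IsGLabelling α κ) (y₀ : D × G) :
    IsGlobalTension (mapComponent.sigma (derivedSigma G σ) (derivedAlpha α κ) y₀)
      (mapComponent.alpha (derivedSigma G σ) (derivedAlpha α κ) y₀)
      (κ ∘ fun y => (y : D × G).1) :=
  isGlobalTension_of_potential (fun y => hκ (y : D × G).1) (f := fun y => (y : D × G).2)
    (fun _ => rfl) (fun _ => rfl)

end Derived

/-- Every local `G`-tension `κ` on a connected combinatorial map `M` admits a minimal global
covering: a covering `p : M' → M` by a connected map such that `κ∘p` is a global `G`-tension,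
through which every other such covering factors. -/
theorem exists_minimal_global_covering
    {D : Type} [Fintype D] [Nonempty D] (σ α : Equiv.Perm D)
    (hinv : ∀ d, α (α d) = d) (hfpf : ∀ d, α d ≠ d)
    (hconn : MapConnected σ α)
    {G : Type} [Group G] [Fintype G]
    (κ : D → G) (hκ : IsLocalTension σ α κ) :
    ∃ (D' : Type) (_ : Fintype D') (σ' α' : Equiv.Perm D'),
      (∀ d, α' (α' d) = d) ∧ (∀ d, α' d ≠ d) ∧ MapConnected σ' α' ∧
      ∃ p : D' → D, IsMapCovering σ' α' σ α p ∧ IsGlobalTension σ' α' (κ ∘ p) ∧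
        ∀ (D'' : Type) (_ : Fintype D'') (σ'' α'' : Equiv.Perm D''),
          (∀ d, α'' (α'' d) = d) → (∀ d, α'' d ≠ d) → MapConnected σ'' α'' →
          ∀ r : D'' → D, IsMapCovering σ'' α'' σ α r → IsGlobalTension σ'' α'' (κ ∘ r) →
          ∃ q : D'' → D', IsMapCovering σ'' α'' σ' α' q ∧ p ∘ q = r := by
  obtain ⟨d₀⟩ := ‹Nonempty D›
  let y₀ : D × G := (d₀, 1)
  refine ⟨mapComponent (derivedSigma G σ) (derivedAlpha α κ) y₀, Fintype.ofFinite _,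
    mapComponent.sigma _ _ y₀, mapComponent.alpha _ _ y₀,
    fun y => Subtype.ext (derivedAlpha_involutive hinv hκ.1 y),
    fun y h => hfpf (y : D × G).1 (congrArg (Prod.fst ∘ Subtype.val) h),
    mapComponent.mapConnected _ _ y₀, fun y => (y : D × G).1,
    hconn.isMapCovering_derived_fst y₀, isGlobalTension_derived_fst hκ.1 y₀, ?_⟩
  intro D'' _ σ'' α'' hinv'' _ hconn'' r hr hrκ
  obtain ⟨e₀, he₀⟩ := hr.1 d₀
  obtain ⟨f, hf₀, hfσ, hfα⟩ := hrκ.exists_potential hinv'' hconn'' e₀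
  obtain ⟨q, hq, hqcov⟩ := hconn''.exists_isMapCovering_mapComponent (σY := derivedSigma G σ)
    (αY := derivedAlpha α κ) (φ := fun e => (r e, f e)) (y₀ := y₀)
    (fun e => Prod.ext (hr.2.1 e) (hfσ e)) (fun e => Prod.ext (hr.2.2.1 e) (hfα e))
    (fun e₁ e₂ hc h => hr.2.2.2 e₁ e₂ hc (congrArg Prod.fst h)) (Prod.ext he₀ hf₀)
  exact ⟨q, hqcov, funext fun e => congrArg Prod.fst (hq e)⟩
end

section
/- Let G be a finite group and M = (D, σ, α) a connected combinatorial map with |V(M)| − |E(M)| + |F(M)| = 2 (i.e. M is planar). Then every local G-tension on M is a global G-tension on M. -/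
open Equiv

/-!
Lift `M` to the derived map on `D × G`, with vertex rotation `(d, g) ↦ (σ d, g)` and edge
involution `(d, g) ↦ (α d, g * κ d)`. Since `κ` is trivial around every face, the derived map has
`|G|` times as many vertices and faces as `M`, and at least `|D| |G| / 2` edges, so by planarity
its Euler characteristic is at least `2 |G|`. Every component has Euler characteristic at most `2`
(the genus is non-negative), hence there are at least `|G|` components. As `M` is connected, each
component meets the fibre over a fixed dart `d₀`, so each meets it exactly once. A closed walk at
`d₀` lifts to a walk from `(d₀, 1)` to `(d₀, h)`, where `h` is its height; hence `h = 1`.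
-/

namespace Setoid

variable {X : Type*}

open Classical in
/-- The classes of `a` and `b` merged, encoded as the kernel of the map sending the class of `b`
to that of `a`. -/
noncomputable def glue (s : Setoid X) (a b : X) : Setoid X :=
  ker fun x => if s b x then (⟦a⟧ : Quotient s) else ⟦x⟧

variable {s t : Setoid X} {a b : X}

theorem le_glue : s ≤ s.glue a b := by
  intro x y h
  rw [glue, ker_def]
  split_ifs with hx hy hy
  · rfl
  · exact absurd (s.trans hx h) hy
  · exact absurd (s.trans hy (s.symm h)) hx
  · exact Quotient.sound h

theorem glue_rel : s.glue a b a b := by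
  rw [glue, ker_def, ite_self, if_pos (s.refl b)]

theorem glue_le (hst : s ≤ t) (hab : t a b) : s.glue a b ≤ t := by
  intro x y h
  rw [glue, ker_def] at h
  split_ifs at h with hx hy hy
  · exact t.trans (t.symm (hst hx)) (hst hy)
  · exact t.trans (t.symm (hst hx)) (t.trans (t.symm hab) (hst (Quotient.exact h)))
  · exact t.trans (hst (Quotient.exact h)) (t.trans hab (hst hy))
  · exact hst (Quotient.exact h)

theorem glue_eq_self (h : s a b) : s.glue a b = s :=
  le_antisymm (glue_le le_rfl h) le_glue

theorem card_quotient_le_of_le [Finite X] (h : s ≤ t) :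
    Nat.card (Quotient t) ≤ Nat.card (Quotient s) :=
  Nat.card_le_card_of_surjective (Quotient.map' id h) (by rintro ⟨x⟩; exact ⟨⟦x⟧, rfl⟩)

theorem card_quotient_glue_add_one [Finite X] (h : ¬ s a b) :
    Nat.card (Quotient (s.glue a b)) + 1 = Nat.card (Quotient s) := by
  classical
  have hrange : Set.range (fun x => if s b x then (⟦a⟧ : Quotient s) else ⟦x⟧) = {⟦b⟧}ᶜ := by
    ext q
    induction q using Quotient.ind with | _ y => ?_
    simp only [Set.mem_range, Set.mem_compl_singleton_iff, ne_eq, Quotient.eq]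
    constructor
    · rintro ⟨x, hx⟩ hyb
      split_ifs at hx with hbx
      · exact h (s.trans (Quotient.exact hx) hyb)
      · exact hbx (s.symm (s.trans (Quotient.exact hx) hyb))
    · intro hy
      exact ⟨y, by rw [if_neg (fun h => hy (s.symm h))]⟩
  rw [glue, Nat.card_congr (quotientKerEquivRange _), hrange, Nat.card_coe_set_eq,
    ← Set.ncard_compl_add_ncard {(⟦b⟧ : Quotient s)}, Set.ncard_singleton]

theorem card_quotient_le_card_quotient_glue_add_one [Finite X] :
    Nat.card (Quotient s) ≤ Nat.card (Quotient (s.glue a b)) + 1 := by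
  by_cases h : s a b
  · rw [glue_eq_self h]
    exact Nat.le_succ _
  · exact (card_quotient_glue_add_one h).ge

theorem card_quotient_eq_of_le_bot (h : s ≤ ⊥) : Nat.card (Quotient s) = Nat.card X :=
  (Nat.card_eq_of_bijective _ ⟨fun _ _ hxy => h (Quotient.exact hxy), Quotient.mk_surjective⟩).symm

def classPreserving (s : Setoid X) : Subgroup (Equiv.Perm X) where
  carrier := {g | ∀ x, s x (g x)}
  mul_mem' hg hh x := s.trans (hh x) (hg _)
  one_mem' := s.refl
  inv_mem' {g} hg x := s.symm (by simpa using hg (g⁻¹ x))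

theorem swap_mem_classPreserving [DecidableEq X] (h : s a b) :
    Equiv.swap a b ∈ s.classPreserving := by
  intro x
  rcases eq_or_ne x a with rfl | hxa
  · rwa [Equiv.swap_apply_left]
  rcases eq_or_ne x b with rfl | hxb
  · rw [Equiv.swap_apply_right]; exact s.symm h
  · rw [Equiv.swap_apply_of_ne_of_ne hxa hxb]

theorem orbitRel_closure_le {S : Set (Equiv.Perm X)} (hS : S ⊆ s.classPreserving) :
    MulAction.orbitRel (Subgroup.closure S) X ≤ s := by
  rintro x y ⟨⟨g, hg⟩, rfl⟩
  exact s.symm (Subgroup.closure_le _ |>.mpr hS hg y)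

end Setoid

namespace Equiv.Perm

variable {X : Type*}

theorem cycleSetoid_le_of_mem_classPreserving {s : Setoid X} {p : Perm X}
    (h : p ∈ s.classPreserving) : p.cycleSetoid ≤ s := by
  rintro x _ ⟨i, rfl⟩
  exact zpow_mem h i x

theorem cycleCount_le_card [Finite X] (p : Perm X) : p.cycleCount ≤ Nat.card X :=
  Nat.card_le_card_of_surjective _ Quotient.mk_surjective

theorem cycleCount_one : (1 : Perm X).cycleCount = Nat.card X :=
  Setoid.card_quotient_eq_of_le_bot fun _ _ => sameCycle_one.mp

theorem cycleCount_inv (p : Perm X) : p⁻¹.cycleCount = p.cycleCount := by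
  rw [cycleCount, cycleCount, show p⁻¹.cycleSetoid = p.cycleSetoid from
    Setoid.ext fun _ _ => sameCycle_inv]

theorem card_le_two_mul_cycleCount [Finite X] {τ : Perm X}
    (h : ∀ x, τ (τ x) = x) : Nat.card X ≤ 2 * τ.cycleCount := by
  have hsq : τ ^ 2 = 1 := Equiv.ext fun x => by simp [sq, h]
  have hcycle {x y : X} (hxy : τ.SameCycle x y) : y = x ∨ y = τ x := by
    obtain ⟨i, rfl⟩ := hxy
    obtain ⟨k, rfl | rfl⟩ := Int.even_or_odd' i
    · left; rw [zpow_mul, zpow_ofNat, hsq, one_zpow]; rfl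
    · right; rw [zpow_add_one, zpow_mul, zpow_ofNat, hsq, one_zpow, one_mul]
  calc Nat.card X ≤ Nat.card (Quotient τ.cycleSetoid × Bool) :=
        Nat.card_le_card_of_surjective (fun z => cond z.2 z.1.out (τ z.1.out)) fun x =>
          (hcycle (Quotient.mk_out (s := τ.cycleSetoid) x)).elim
            (fun hx => ⟨(⟦x⟧, true), hx.symm⟩) (fun hx => ⟨(⟦x⟧, false), hx.symm⟩)
    _ = 2 * τ.cycleCount := by simp [Nat.card_prod, cycleCount, mul_comm]

theorem exists_lift_of_mem_closure {Y : Type*} (π : Y → X) {S : Set (Perm X)}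
    {H : Subgroup (Perm Y)} (hS : ∀ s ∈ S, ∃ s' ∈ H, ∀ y, π (s' y) = s (π y)) {w : Perm X}
    (hw : w ∈ Subgroup.closure S) : ∃ w' ∈ H, ∀ y, π (w' y) = w (π y) := by
  induction hw using Subgroup.closure_induction with
  | mem s hs => exact hS s hs
  | one => exact ⟨1, H.one_mem, fun _ => rfl⟩
  | mul u v _ _ hu hv =>
    obtain ⟨u', hu', hu⟩ := hu
    obtain ⟨v', hv', hv⟩ := hv
    exact ⟨u' * v', H.mul_mem hu' hv', fun y => by simp [hu, hv]⟩
  | inv u _ hu =>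
    obtain ⟨u', hu', hu⟩ := hu
    exact ⟨u'⁻¹, H.inv_mem hu', fun y => eq_inv_iff_eq.mpr (by simp [← hu])⟩

variable [DecidableEq X]

theorem cycleSetoid_mul_swap_le_glue (p : Perm X) (a b : X) :
    (p * swap a b).cycleSetoid ≤ p.cycleSetoid.glue a b :=
  cycleSetoid_le_of_mem_classPreserving <|
    mul_mem (fun x => Setoid.le_glue (sameCycle_apply_right.mpr (SameCycle.refl p x)))
      (Setoid.swap_mem_classPreserving Setoid.glue_rel)

theorem sameCycle_mul_swap_of_not_sameCycle [Finite X] {p : Perm X} {a b : X}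
    (h : ¬ p.SameCycle a b) :
    (p * swap a b).SameCycle a b := by
  set t := p * swap a b with ht
  by_contra hab
  -- the `t`-orbit of `a` enters the `p`-cycle of `b` and can only leave it through `b`
  have key : ∀ n, 1 ≤ n → p.SameCycle b ((t ^ n) a) := by
    intro n hn
    induction n, hn using Nat.le_induction with
    | base => rw [pow_one, ht, mul_apply, swap_apply_left]; exact ⟨1, rfl⟩
    | succ n _ ih =>
      have hna : (t ^ n) a ≠ a := fun he => h (he ▸ ih).symm
      have hnb : (t ^ n) a ≠ b := fun he => hab (he ▸ ⟨n, rfl⟩)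
      rw [pow_succ', mul_apply, ht, mul_apply, swap_apply_of_ne_of_ne hna hnb]
      exact sameCycle_apply_right.mpr ih
  have hper : (t ^ orderOf t) a = a := by rw [pow_orderOf_eq_one]; rfl
  exact h (hper ▸ key _ (orderOf_pos t)).symm

theorem cycleCount_mul_swap_le [Finite X] (p : Perm X) (a b : X) :
    (p * swap a b).cycleCount ≤ p.cycleCount + 1 := by
  have h := cycleSetoid_mul_swap_le_glue (p * swap a b) a b
  rw [mul_swap_mul_self] at h
  exact Setoid.card_quotient_le_card_quotient_glue_add_one.trans
    (Nat.add_le_add_right (Setoid.card_quotient_le_of_le h) 1)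

theorem cycleCount_mul_swap_add_one_le [Finite X] {p : Perm X} {a b : X}
    (h : ¬ p.SameCycle a b) :
    (p * swap a b).cycleCount + 1 ≤ p.cycleCount := by
  have ht := sameCycle_mul_swap_of_not_sameCycle h
  have hp : p.cycleSetoid ≤ (p * swap a b).cycleSetoid := by
    have := cycleSetoid_mul_swap_le_glue (p * swap a b) a b
    rwa [mul_swap_mul_self, Setoid.glue_eq_self ht] at this
  calc (p * swap a b).cycleCount + 1 ≤ Nat.card (Quotient (p.cycleSetoid.glue a b)) + 1 :=
        Nat.add_le_add_right (Setoid.card_quotient_le_of_le (Setoid.glue_le hp ht)) 1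
    _ = p.cycleCount := Setoid.card_quotient_glue_add_one h

theorem exists_swap_list [Finite X] (p : Perm X) :
    ∃ l : List (X × X), (l.map fun e => swap e.1 e.2).prod = p ∧
      l.length + p.cycleCount ≤ Nat.card X := by
  by_cases hp : p = 1
  · exact ⟨[], by simp [hp], by simp [hp, cycleCount_one]⟩
  obtain ⟨x, hx⟩ : ∃ x, p x ≠ x := not_forall.mp fun h => hp (Equiv.ext h)
  set q := p * swap x (p⁻¹ x) with hq
  have hqx : q x = x := by simp [hq]
  have hsplit : p.cycleCount + 1 ≤ q.cycleCount := by
    have hne : ¬ q.SameCycle x (p⁻¹ x) := fun ⟨i, hi⟩ =>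
      hx (eq_inv_iff_eq.mp ((zpow_apply_eq_self_of_apply_eq_self hqx i).symm.trans hi))
    simpa [hq, mul_swap_mul_self] using cycleCount_mul_swap_add_one_le hne
  obtain ⟨l, hl, hlen⟩ := exists_swap_list q
  refine ⟨l ++ [(x, p⁻¹ x)], by simp [hl, hq], ?_⟩
  rw [List.length_append, List.length_singleton]
  omega
termination_by Nat.card X - p.cycleCount
decreasing_by rw [hq] at hsplit; have := (p * swap x (p⁻¹ x)).cycleCount_le_card; omega

end Equiv.Perm

theorem MulAction.orbitRel.Quotient.mk_perm_apply {Y : Type*} {H : Subgroup (Equiv.Perm Y)}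
    {h : Equiv.Perm Y} (hh : h ∈ H) (y : Y) :
    (⟦h y⟧ : MulAction.orbitRel.Quotient H Y) = ⟦y⟧ :=
  Quotient.sound ⟨⟨h, hh⟩, rfl⟩

theorem List.IsChain.apply_eq_apply_getLast {α β M : Type*} [Monoid M] {R : α → α → Prop}
    {f : α → M} {φ : α → M → β} :
    ∀ {a : α} {l : List α}, (a :: l).IsChain R →
      (∀ ⦃x y⦄, R x y → ∀ g, φ x g = φ y (g * f x)) → ∀ g,
      φ a g = φ ((a :: l).getLast (List.cons_ne_nil a l)) (g * ((a :: l).dropLast.map f).prod)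
  | _, [], _, _, _ => by simp
  | _, b :: l, h, hR, g => by
    rw [List.isChain_cons_cons] at h
    rw [hR h.1, h.2.apply_eq_apply_getLast hR, List.getLast_cons (List.cons_ne_nil b l),
      List.dropLast_cons_cons, List.map_cons, List.prod_cons, mul_assoc]

section Genus

open Equiv Equiv.Perm

variable {X : Type*}

def edgeComponents (l : List (X × X)) : Setoid X :=
  Relation.EqvGen.setoid fun x y => (x, y) ∈ l

theorem edgeComponents_rel_of_mem {l : List (X × X)} {e : X × X} (h : e ∈ l) :
    edgeComponents l e.1 e.2 :=
  Relation.EqvGen.rel _ _ h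

variable [DecidableEq X]

theorem prod_swap_mem_classPreserving {s : Setoid X} {l : List (X × X)}
    (h : ∀ e ∈ l, s e.1 e.2) : (l.map fun e => swap e.1 e.2).prod ∈ s.classPreserving :=
  Subgroup.list_prod_mem _ fun g hg => by
    obtain ⟨e, he, rfl⟩ := List.mem_map.mp hg
    exact Setoid.swap_mem_classPreserving (h e he)

variable [Finite X]

/-- Multiplying by `swap a b` either splits a cycle, and then `a` and `b` already lie in one
component, or merges two cycles, and then the number of components drops by at most one. -/
theorem card_add_cycleCount_prod_swap_le (l : List (X × X)) :
    Nat.card X + (l.map fun e => swap e.1 e.2).prod.cycleCount ≤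
      l.length + 2 * Nat.card (Quotient (edgeComponents l)) := by
  induction l using List.reverseRecOn with
  | nil =>
    have h : edgeComponents ([] : List (X × X)) ≤ ⊥ := Setoid.eqvGen_le (by simp)
    rw [List.map_nil, List.prod_nil, cycleCount_one, Setoid.card_quotient_eq_of_le_bot h]
    omega
  | append_singleton l e ih =>
    obtain ⟨a, b⟩ := e
    simp only [List.map_append, List.map_singleton, List.prod_append, List.prod_singleton,
      List.length_append, List.length_singleton]
    set P := (l.map fun e => swap e.1 e.2).prod
    set C := edgeComponents l
    have hC : edgeComponents (l ++ [(a, b)]) ≤ C.glue a b := Setoid.eqvGen_le fun x y h => by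
      rcases List.mem_append.mp h with h | h
      · exact Setoid.le_glue (edgeComponents_rel_of_mem h)
      · obtain ⟨rfl, rfl⟩ := Prod.mk.inj (List.mem_singleton.mp h)
        exact Setoid.glue_rel
    have hcard := C.card_quotient_le_card_quotient_glue_add_one.trans
      (Nat.add_le_add_right (Setoid.card_quotient_le_of_le hC) 1)
    by_cases hab : P.SameCycle a b
    · have hCab : C a b := cycleSetoid_le_of_mem_classPreserving
        (prod_swap_mem_classPreserving fun _ => edgeComponents_rel_of_mem) hab
      rw [Setoid.glue_eq_self hCab] at hC
      have := Setoid.card_quotient_le_of_le hC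
      have := cycleCount_mul_swap_le P a b
      omega
    · have := cycleCount_mul_swap_add_one_le hab
      omega

/-- Every component of the hypermap `(X, p, r)` has Euler characteristic at most `2`. -/
theorem cycleCount_add_cycleCount_add_cycleCount_mul_le (p r : Perm X) :
    p.cycleCount + r.cycleCount + (p * r).cycleCount ≤
      Nat.card X + 2 * Nat.card (MulAction.orbitRel.Quotient (Subgroup.closure {p, r}) X) := by
  obtain ⟨l₁, h₁, hlen₁⟩ := exists_swap_list p
  obtain ⟨l₂, h₂, hlen₂⟩ := exists_swap_list r
  obtain ⟨l₃, h₃, hlen₃⟩ := exists_swap_list (p * r)⁻¹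
  set l := l₁ ++ l₂ ++ l₃
  have hprod : (l.map fun e => swap e.1 e.2).prod = 1 := by simp [l, h₁, h₂, h₃]
  have hbound := card_add_cycleCount_prod_swap_le l
  rw [hprod, cycleCount_one, show l.length = l₁.length + l₂.length + l₃.length by
    simp only [l, List.length_append]] at hbound
  rw [cycleCount_inv] at hlen₃
  have hmem {l' : List (X × X)} (hl' : l' ⊆ l) :
      (l'.map fun e => swap e.1 e.2).prod ∈ (edgeComponents l).classPreserving :=
    prod_swap_mem_classPreserving fun _ he => edgeComponents_rel_of_mem (hl' he)
  have horbit : MulAction.orbitRel (Subgroup.closure {p, r}) X ≤ edgeComponents l :=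
    Setoid.orbitRel_closure_le <| by
      rintro _ (rfl | rfl)
      · exact h₁ ▸ hmem (by simp [l])
      · exact h₂ ▸ hmem (by simp [l])
  have hcomp : Nat.card (Quotient (edgeComponents l)) ≤
      Nat.card (MulAction.orbitRel.Quotient (Subgroup.closure {p, r}) X) :=
    Setoid.card_quotient_le_of_le horbit
  omega

end Genus

section VoltageLift

open Equiv Equiv.Perm

variable {D G : Type*} [Group G]

def voltageLift (ρ : Perm D) (w : D → G) : Perm (D × G) where
  toFun z := (ρ z.1, z.2 * w z.1)
  invFun z := (ρ⁻¹ z.1, z.2 * (w (ρ⁻¹ z.1))⁻¹)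
  left_inv _ := by simp
  right_inv _ := by simp

@[simp]
theorem voltageLift_apply (ρ : Perm D) (w : D → G) (d : D) (g : G) :
    voltageLift ρ w (d, g) = (ρ d, g * w d) :=
  rfl

theorem voltageLift_one_mul (ρ τ : Perm D) (w : D → G) :
    voltageLift ρ 1 * voltageLift τ w = voltageLift (ρ * τ) w := by
  ext ⟨d, g⟩ <;> simp

theorem voltageLift_pow_apply (ρ : Perm D) (w : D → G) (k : ℕ) (d : D) (g : G) :
    (voltageLift ρ w ^ k) (d, g) =
      ((ρ ^ k) d, g * ((List.range k).map fun i => w ((ρ ^ i) d)).prod) := by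
  induction k with
  | zero => simp
  | succ k ih =>
    rw [pow_succ', mul_apply, ih, voltageLift_apply, List.prod_range_succ, pow_succ', mul_apply,
      mul_assoc]

theorem isPeriodicPt_voltageLift {ρ : Perm D} {w : D → G} {d : D} (hw : aroundProd ρ w d = 1)
    (g : G) : Function.IsPeriodicPt (voltageLift ρ w) (Function.minimalPeriod ρ d) (d, g) := by
  rw [Function.IsPeriodicPt, Function.IsFixedPt, ← coe_pow, voltageLift_pow_apply, coe_pow,
    Function.iterate_minimalPeriod]
  simp only [aroundProd] at hw
  rw [hw, mul_one]

variable [Finite D] [Finite G]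

theorem Equiv.Perm.SameCycle.of_voltageLift {ρ : Perm D} {w : D → G} {d d' : D} {g g' : G}
    (h : (voltageLift ρ w).SameCycle (d, g) (d', g')) : ρ.SameCycle d d' := by
  obtain ⟨k, -, hk⟩ := h.exists_pow_eq'
  rw [voltageLift_pow_apply] at hk
  exact ⟨k, by simpa using congrArg Prod.fst hk⟩

theorem eq_of_sameCycle_voltageLift {ρ : Perm D} {w : D → G} (hw : ∀ d, aroundProd ρ w d = 1)
    {d : D} {g g' : G} (h : (voltageLift ρ w).SameCycle (d, g) (d, g')) : g = g' := by
  obtain ⟨k, -, hk⟩ := h.exists_pow_eq'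
  have hρ : Function.IsPeriodicPt ρ k d := by
    simpa [Function.IsPeriodicPt, Function.IsFixedPt, ← coe_pow, voltageLift_pow_apply]
      using congrArg Prod.fst hk
  obtain ⟨q, rfl⟩ := hρ.minimalPeriod_dvd
  have hfix := ((isPeriodicPt_voltageLift (hw d) g).mul_const q).eq
  rw [← coe_pow] at hfix
  exact congrArg Prod.snd (hfix.symm.trans hk)

theorem cycleCount_voltageLift {ρ : Perm D} {w : D → G} (hw : ∀ d, aroundProd ρ w d = 1) :
    (voltageLift ρ w).cycleCount = ρ.cycleCount * Nat.card G := by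
  rw [cycleCount, cycleCount, ← Nat.card_prod]
  refine (Nat.card_eq_of_bijective (fun z : Quotient ρ.cycleSetoid × G =>
    (⟦(z.1.out, z.2)⟧ : Quotient (voltageLift ρ w).cycleSetoid)) ⟨?_, ?_⟩).symm
  · rintro ⟨q, g⟩ ⟨q', g'⟩ h
    have h' : (voltageLift ρ w).SameCycle (q.out, g) (q'.out, g') := Quotient.exact h
    obtain rfl : q = q' := Quotient.out_equiv_out.mp (SameCycle.of_voltageLift h')
    rw [eq_of_sameCycle_voltageLift hw h']
  · rintro ⟨d, g⟩
    obtain ⟨k, -, hk⟩ := (Quotient.mk_out (s := ρ.cycleSetoid) d).symm.exists_pow_eq'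
    refine ⟨(⟦d⟧, g * ((List.range k).map fun i => w ((ρ ^ i) d)).prod), Quotient.sound ?_⟩
    rw [← hk, ← voltageLift_pow_apply]
    exact (SameCycle.refl _ _).pow_right |>.symm

end VoltageLift

section DerivedMap

open Equiv Equiv.Perm

variable {D G : Type*} [Group G] {σ α : Perm D}

theorem surjective_mk_of_mapConnected (hconn : MapConnected σ α) (v w : D → G) (d₀ : D) :
    Function.Surjective fun g : G => (⟦(d₀, g)⟧ : MulAction.orbitRel.Quotient
      (Subgroup.closure {voltageLift σ v, voltageLift α w}) (D × G)) := by
  rintro ⟨d, g⟩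
  obtain ⟨u, hu, rfl⟩ := hconn d d₀
  have hgen : ∀ s ∈ ({σ, α} : Set (Perm D)), ∃ s' ∈ Subgroup.closure
      {voltageLift σ v, voltageLift α w}, ∀ z : D × G, (s' z).1 = s z.1 := by
    rintro s (rfl | rfl)
    exacts [⟨voltageLift _ v, Subgroup.subset_closure (by simp), fun _ => rfl⟩,
      ⟨voltageLift _ w, Subgroup.subset_closure (by simp), fun _ => rfl⟩]
  obtain ⟨u', hu', hu'fst⟩ := exists_lift_of_mem_closure Prod.fst hgen hu
  have hfst : (u' (d, g)).1 = u d := hu'fst (d, g)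
  refine ⟨(u' (d, g)).2, ?_⟩
  show ⟦(u d, (u' (d, g)).2)⟧ = ⟦(d, g)⟧
  rw [← hfst, Prod.mk.eta, MulAction.orbitRel.Quotient.mk_perm_apply hu']

theorem mk_eq_mk_of_sameCycle_apply [Finite D] {κ : D → G} {a b : D}
    (hab : σ.SameCycle (α a) b) (g : G) :
    (⟦(a, g)⟧ : MulAction.orbitRel.Quotient
      (Subgroup.closure {voltageLift σ 1, voltageLift α κ}) (D × G)) = ⟦(b, g * κ a)⟧ := by
  obtain ⟨k, -, rfl⟩ := hab.exists_pow_eq'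
  have hlift : (voltageLift σ 1 ^ k) (voltageLift α κ (a, g)) = ((σ ^ k) (α a), g * κ a) := by
    simp [voltageLift_pow_apply]
  rw [← hlift, MulAction.orbitRel.Quotient.mk_perm_apply
      (pow_mem (Subgroup.subset_closure (by simp)) k),
    MulAction.orbitRel.Quotient.mk_perm_apply (Subgroup.subset_closure (by simp))]

theorem card_le_card_orbitRel_quotient_of_planar [Finite D] [Finite G] {κ : D → G}
    (hinv : ∀ d, α (α d) = d) (hlab : IsGLabelling α κ)
    (hface : ∀ d, aroundProd (σ * α) κ d = 1)
    (hplanar : (σ.cycleCount : ℤ) - (α.cycleCount : ℤ) + ((σ * α).cycleCount : ℤ) = 2) :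
    Nat.card G ≤ Nat.card (MulAction.orbitRel.Quotient
      (Subgroup.closure {voltageLift σ 1, voltageLift α κ}) (D × G)) := by
  classical
  have hgenus := cycleCount_add_cycleCount_add_cycleCount_mul_le (voltageLift σ (1 : D → G))
    (voltageLift α κ)
  rw [voltageLift_one_mul, cycleCount_voltageLift (fun d => List.prod_eq_one (by simp)),
    cycleCount_voltageLift hface, Nat.card_prod] at hgenus
  have hedges := card_le_two_mul_cycleCount hinv
  have hedges' := card_le_two_mul_cycleCount (τ := voltageLift α κ) fun ⟨d, g⟩ => by
    simp [hinv, hlab d]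
  rw [Nat.card_prod] at hedges'
  nlinarith

end DerivedMap

theorem planar_local_tension_is_global_general
    {D : Type} [Fintype D] (σ α : Equiv.Perm D)
    (hinv : ∀ d, α (α d) = d)
    (hconn : MapConnected σ α)
    (hplanar : (σ.cycleCount : ℤ) - (α.cycleCount : ℤ) + ((σ * α).cycleCount : ℤ) = 2)
    {G : Type} [Group G] [Fintype G]
    (κ : D → G) (hκ : IsLocalTension σ α κ) :
    IsGlobalTension σ α κ := by
  obtain ⟨hlab, hface⟩ := hκ
  refine ⟨hlab, ?_⟩
  rintro W ⟨hne, hchain, hclose⟩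
  obtain ⟨d₀, t, rfl⟩ := List.exists_cons_of_ne_nil hne
  have hinj := ((surjective_mk_of_mapConnected hconn 1 κ d₀).bijective_of_nat_card_le
    (card_le_card_orbitRel_quotient_of_planar hinv hlab hface hplanar)).injective
  have hclosed : (d₀ :: (t ++ [d₀])).IsChain fun a b => σ.SameCycle (α a) b :=
    List.IsChain.append hchain (by simp)
      (by simpa [List.getLast?_eq_some_getLast hne] using hclose)
  have hlift :=
    hclosed.apply_eq_apply_getLast (fun _ _ => mk_eq_mk_of_sameCycle_apply (κ := κ)) 1
  simp only [← List.cons_append, List.dropLast_concat, List.getLast_concat, one_mul] at hlift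
  exact (hinj hlift).symm

/-- On a connected combinatorial map of Euler characteristic `2` (a planar map), every
local `G`-tension is a global `G`-tension. -/
theorem planar_local_tension_is_global
    {D : Type} [Fintype D] [Nonempty D] (σ α : Equiv.Perm D)
    (hinv : ∀ d, α (α d) = d) (hfpf : ∀ d, α d ≠ d)
    (hconn : MapConnected σ α)
    (hplanar : (σ.cycleCount : ℤ) - (α.cycleCount : ℤ) + ((σ * α).cycleCount : ℤ) = 2)
    {G : Type} [Group G] [Fintype G]
    (κ : D → G) (hκ : IsLocalTension σ α κ) :
    IsGlobalTension σ α κ :=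
  planar_local_tension_is_global_general σ α hinv hconn hplanar κ hκ
end
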